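/- Let G be a G-formula and let Γ be a multiset of D-formulas. Then Γ ⊢_C G if and only if G⊃⊥, Γ ⊢_O G. -/
import Mathlib


set_option maxHeartbeats 1000000

/-- Terms of a first-order language: variables (de Bruijn indices for
quantified variables) and constants. -/
inductive Tm : Type
  | var : ℕ → Tm
  | const : ℕ → Tm

namespace Tm

/-- Substitution of the term `u` for the variable with index `k`. -/
def subst (k : ℕ) (u : Tm) : Tm → Tm
  | var n => if n = k then u else var n
  | const c => const c

/-- The constant `c` occurs in a term. -/
def constIn (c : ℕ) : Tm → Prop
  | var _ => False
  | const d => d = c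

end Tm

/-- First-order formulas over the primitives ⊤, ⊥, ∧, ∨, ⊃, ∃, ∀.
Quantifiers are represented with de Bruijn indices. -/
inductive Fm : Type
  | top : Fm
  | bot : Fm
  | atom : ℕ → List Tm → Fm
  | conj : Fm → Fm → Fm
  | disj : Fm → Fm → Fm
  | imp : Fm → Fm → Fm
  | ex : Fm → Fm
  | all : Fm → Fm

namespace Fm

/-- Substitution of a term for the variable with de Bruijn index `k`. -/
def subst (k : ℕ) (u : Tm) : Fm → Fm
  | top => top
  | bot => bot
  | atom p ts => atom p (ts.map (Tm.subst k u))
  | conj a b => conj (subst k u a) (subst k u b)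
  | disj a b => disj (subst k u a) (subst k u b)
  | imp a b => imp (subst k u a) (subst k u b)
  | ex a => ex (subst (k + 1) u a)
  | all a => all (subst (k + 1) u a)

/-- `[t/x]B`: instantiation of the outermost bound variable of the body of a
quantified formula with the term `u`. -/
def inst (u : Tm) (a : Fm) : Fm := subst 0 u a

/-- Atomic formulas (⊤ and ⊥ are *not* atomic). -/
def isAtom : Fm → Prop
  | atom _ _ => True
  | _ => False

/-- Formulas that need no right-introduction rule in a uniform/O_G proof:
atomic formulas and ⊥. -/
def neutral (F : Fm) : Prop := F.isAtom ∨ F = bot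

/-- The constant `c` occurs in a formula. -/
def constIn (c : ℕ) : Fm → Prop
  | top => False
  | bot => False
  | atom _ ts => ∃ t ∈ ts, t.constIn c
  | conj a b => constIn c a ∨ constIn c b
  | disj a b => constIn c a ∨ constIn c b
  | imp a b => constIn c a ∨ constIn c b
  | ex a => constIn c a
  | all a => constIn c a

end Fm

/-- The eigenvariable (constant) `c` does not occur in the sequent `Γ → Δ`. -/
def FreshSeq (c : ℕ) (Γ Δ : Multiset Fm) : Prop :=
  (∀ F ∈ Γ, ¬ F.constIn c) ∧ ∀ F ∈ Δ, ¬ F.constIn c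

/-- The sequent `Γ → Δ` is an axiom: ⊤ ∈ Δ, or some `A` that is ⊥ or atomic
belongs to both `Γ` and `Δ`. -/
def AxSeq (Γ Δ : Multiset Fm) : Prop :=
  Fm.top ∈ Δ ∨ ∃ A : Fm, (A = Fm.bot ∨ A.isAtom) ∧ A ∈ Γ ∧ A ∈ Δ

/-- C-proofs: arbitrary derivations in the sequent calculus of the paper.
Sequents are pairs of multisets of formulas. -/
inductive CProof : Multiset Fm → Multiset Fm → Type
  | ax {Γ Δ : Multiset Fm} (h : AxSeq Γ Δ) : CProof Γ Δ
  | contrL {B : Fm} {Γ Δ : Multiset Fm} (p : CProof (B ::ₘ B ::ₘ Γ) Δ) : CProof (B ::ₘ Γ) Δ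
  | contrR {B : Fm} {Γ Δ : Multiset Fm} (p : CProof Γ (B ::ₘ B ::ₘ Δ)) : CProof Γ (B ::ₘ Δ)
  | botR {D : Fm} {Γ Δ : Multiset Fm} (p : CProof Γ (Fm.bot ::ₘ Δ)) : CProof Γ (D ::ₘ Δ)
  | andL {B D : Fm} {Γ Δ : Multiset Fm} (p : CProof (B ::ₘ D ::ₘ (B.conj D) ::ₘ Γ) Δ) :
      CProof ((B.conj D) ::ₘ Γ) Δ
  | andR {B D : Fm} {Γ Δ : Multiset Fm} (p : CProof Γ (B ::ₘ Δ)) (q : CProof Γ (D ::ₘ Δ)) :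
      CProof Γ ((B.conj D) ::ₘ Δ)
  | orL {B D : Fm} {Γ Δ : Multiset Fm} (p : CProof (B ::ₘ Γ) Δ) (q : CProof (D ::ₘ Γ) Δ) :
      CProof ((B.disj D) ::ₘ Γ) Δ
  | orR1 {B D : Fm} {Γ Δ : Multiset Fm} (p : CProof Γ (B ::ₘ Δ)) : CProof Γ ((B.disj D) ::ₘ Δ)
  | orR2 {B D : Fm} {Γ Δ : Multiset Fm} (p : CProof Γ (D ::ₘ Δ)) : CProof Γ ((B.disj D) ::ₘ Δ)
  | impL {B D : Fm} {Γ Δ Θ : Multiset Fm} (p : CProof ((B.imp D) ::ₘ Γ) (B ::ₘ Δ))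
      (q : CProof (D ::ₘ Γ) Θ) : CProof ((B.imp D) ::ₘ Γ) (Δ + Θ)
  | impR {B D : Fm} {Γ Δ : Multiset Fm} (p : CProof (B ::ₘ Γ) (D ::ₘ Δ)) :
      CProof Γ ((B.imp D) ::ₘ Δ)
  | allL {B : Fm} {Γ Δ : Multiset Fm} (t : Tm)
      (p : CProof ((B.inst t) ::ₘ (Fm.all B) ::ₘ Γ) Δ) : CProof ((Fm.all B) ::ₘ Γ) Δ
  | exR {B : Fm} {Γ Δ : Multiset Fm} (t : Tm) (p : CProof Γ ((B.inst t) ::ₘ Δ)) :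
      CProof Γ ((Fm.ex B) ::ₘ Δ)
  | exL {B : Fm} {Γ Δ : Multiset Fm} (c : ℕ) (hc : FreshSeq c ((Fm.ex B) ::ₘ Γ) Δ)
      (p : CProof ((B.inst (Tm.const c)) ::ₘ Γ) Δ) : CProof ((Fm.ex B) ::ₘ Γ) Δ
  | allR {B : Fm} {Γ Δ : Multiset Fm} (c : ℕ) (hc : FreshSeq c Γ ((Fm.all B) ::ₘ Δ))
      (p : CProof Γ ((B.inst (Tm.const c)) ::ₘ Δ)) : CProof Γ ((Fm.all B) ::ₘ Δ)

namespace CProof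

/-- An I-proof is a C-proof in which every sequent has exactly one formula in
its succedent. -/
def isI : ∀ (Γ Δ : Multiset Fm), CProof Γ Δ → Prop
  | _, _, @ax _ Δ _ => Multiset.card Δ = 1
  | _, _, @contrL _ _ Δ p => Multiset.card Δ = 1 ∧ isI _ _ p
  | _, _, @contrR B _ Δ p => Multiset.card (B ::ₘ Δ) = 1 ∧ isI _ _ p
  | _, _, @botR D _ Δ p => Multiset.card (D ::ₘ Δ) = 1 ∧ isI _ _ p
  | _, _, @andL _ _ _ Δ p => Multiset.card Δ = 1 ∧ isI _ _ p
  | _, _, @andR B D _ Δ p q => Multiset.card ((B.conj D) ::ₘ Δ) = 1 ∧ isI _ _ p ∧ isI _ _ q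
  | _, _, @orL _ _ _ Δ p q => Multiset.card Δ = 1 ∧ isI _ _ p ∧ isI _ _ q
  | _, _, @orR1 B D _ Δ p => Multiset.card ((B.disj D) ::ₘ Δ) = 1 ∧ isI _ _ p
  | _, _, @orR2 B D _ Δ p => Multiset.card ((B.disj D) ::ₘ Δ) = 1 ∧ isI _ _ p
  | _, _, @impL _ _ _ Δ Θ p q => Multiset.card (Δ + Θ) = 1 ∧ isI _ _ p ∧ isI _ _ q
  | _, _, @impR B D _ Δ p => Multiset.card ((B.imp D) ::ₘ Δ) = 1 ∧ isI _ _ p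
  | _, _, @allL _ _ Δ _ p => Multiset.card Δ = 1 ∧ isI _ _ p
  | _, _, @exR B _ Δ _ p => Multiset.card ((Fm.ex B) ::ₘ Δ) = 1 ∧ isI _ _ p
  | _, _, @exL _ _ Δ _ _ p => Multiset.card Δ = 1 ∧ isI _ _ p
  | _, _, @allR B _ Δ _ _ p => Multiset.card ((Fm.all B) ::ₘ Δ) = 1 ∧ isI _ _ p

end CProof

/-- Classical provability: `Γ ⊢_C F`. -/
def CProv (Γ : Multiset Fm) (F : Fm) : Prop := Nonempty (CProof Γ ({F} : Multiset Fm))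

/-- Intuitionistic provability: `Γ ⊢_I F`. -/
def IProv (Γ : Multiset Fm) (F : Fm) : Prop := ∃ p : CProof Γ ({F} : Multiset Fm), p.isI

namespace CProof

open Classical in
/-- The nonconstructiveness measure of a C-proof: the number of
nonconstructive occurrences of ∨-L and ⊃-R rules in it. -/
noncomputable def mu : ∀ (Γ Δ : Multiset Fm), CProof Γ Δ → ℕ
  | _, _, ax _ => 0
  | _, _, contrL p => mu _ _ p
  | _, _, contrR p => mu _ _ p
  | _, _, botR p => mu _ _ p
  | _, _, andL p => mu _ _ p
  | _, _, andR p q => mu _ _ p + mu _ _ q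
  | _, _, @orL B D Γ Δ p q =>
      mu _ _ p + mu _ _ q +
        (if ∃ F ∈ Δ, IProv (B ::ₘ Γ) F ∧ IProv (D ::ₘ Γ) F then 0 else 1)
  | _, _, orR1 p => mu _ _ p
  | _, _, orR2 p => mu _ _ p
  | _, _, impL p q => mu _ _ p + mu _ _ q
  | _, _, @impR B D Γ _ p => mu _ _ p + (if IProv (B ::ₘ Γ) D then 0 else 1)
  | _, _, allL _ p => mu _ _ p
  | _, _, exR _ p => mu _ _ p
  | _, _, exL _ _ p => mu _ _ p
  | _, _, allR _ _ p => mu _ _ p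

/-- The sequent `S → P` appears in the given C-proof. -/
def occursSeq : ∀ (Γ Δ : Multiset Fm), CProof Γ Δ → Multiset Fm → Multiset Fm → Prop
  | _, _, @ax Γ Δ _, S, P => Γ = S ∧ Δ = P
  | _, _, @contrL B Γ Δ p, S, P => ((B ::ₘ Γ) = S ∧ Δ = P) ∨ occursSeq _ _ p S P
  | _, _, @contrR B Γ Δ p, S, P => (Γ = S ∧ (B ::ₘ Δ) = P) ∨ occursSeq _ _ p S P
  | _, _, @botR D Γ Δ p, S, P => (Γ = S ∧ (D ::ₘ Δ) = P) ∨ occursSeq _ _ p S P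
  | _, _, @andL B D Γ Δ p, S, P => (((B.conj D) ::ₘ Γ) = S ∧ Δ = P) ∨ occursSeq _ _ p S P
  | _, _, @andR B D Γ Δ p q, S, P =>
      (Γ = S ∧ ((B.conj D) ::ₘ Δ) = P) ∨ occursSeq _ _ p S P ∨ occursSeq _ _ q S P
  | _, _, @orL B D Γ Δ p q, S, P =>
      (((B.disj D) ::ₘ Γ) = S ∧ Δ = P) ∨ occursSeq _ _ p S P ∨ occursSeq _ _ q S P
  | _, _, @orR1 B D Γ Δ p, S, P => (Γ = S ∧ ((B.disj D) ::ₘ Δ) = P) ∨ occursSeq _ _ p S P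
  | _, _, @orR2 B D Γ Δ p, S, P => (Γ = S ∧ ((B.disj D) ::ₘ Δ) = P) ∨ occursSeq _ _ p S P
  | _, _, @impL B D Γ Δ Θ p q, S, P =>
      (((B.imp D) ::ₘ Γ) = S ∧ (Δ + Θ) = P) ∨ occursSeq _ _ p S P ∨ occursSeq _ _ q S P
  | _, _, @impR B D Γ Δ p, S, P => (Γ = S ∧ ((B.imp D) ::ₘ Δ) = P) ∨ occursSeq _ _ p S P
  | _, _, @allL B Γ Δ _ p, S, P => (((Fm.all B) ::ₘ Γ) = S ∧ Δ = P) ∨ occursSeq _ _ p S P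
  | _, _, @exR B Γ Δ _ p, S, P => (Γ = S ∧ ((Fm.ex B) ::ₘ Δ) = P) ∨ occursSeq _ _ p S P
  | _, _, @exL B Γ Δ _ _ p, S, P => (((Fm.ex B) ::ₘ Γ) = S ∧ Δ = P) ∨ occursSeq _ _ p S P
  | _, _, @allR B Γ Δ _ _ p, S, P => (Γ = S ∧ ((Fm.all B) ::ₘ Δ) = P) ∨ occursSeq _ _ p S P

/-- `hasImpR p B S P D` holds when an ⊃-R rule with upper sequent
`B,S → P,D` and lower sequent `S → P,B⊃D` occurs in the proof `p`. -/
def hasImpR : ∀ (Γ Δ : Multiset Fm), CProof Γ Δ → Fm → Multiset Fm → Multiset Fm → Fm → Prop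
  | _, _, ax _, _, _, _, _ => False
  | _, _, contrL p, B, S, P, D => hasImpR _ _ p B S P D
  | _, _, contrR p, B, S, P, D => hasImpR _ _ p B S P D
  | _, _, botR p, B, S, P, D => hasImpR _ _ p B S P D
  | _, _, andL p, B, S, P, D => hasImpR _ _ p B S P D
  | _, _, andR p q, B, S, P, D => hasImpR _ _ p B S P D ∨ hasImpR _ _ q B S P D
  | _, _, orL p q, B, S, P, D => hasImpR _ _ p B S P D ∨ hasImpR _ _ q B S P D
  | _, _, orR1 p, B, S, P, D => hasImpR _ _ p B S P D
  | _, _, orR2 p, B, S, P, D => hasImpR _ _ p B S P D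
  | _, _, impL p q, B, S, P, D => hasImpR _ _ p B S P D ∨ hasImpR _ _ q B S P D
  | _, _, @impR B' D' Γ' Δ' p, B, S, P, D =>
      (B' = B ∧ Γ' = S ∧ Δ' = P ∧ D' = D) ∨ hasImpR _ _ p B S P D
  | _, _, allL _ p, B, S, P, D => hasImpR _ _ p B S P D
  | _, _, exR _ p, B, S, P, D => hasImpR _ _ p B S P D
  | _, _, exL _ _ p, B, S, P, D => hasImpR _ _ p B S P D
  | _, _, allR _ _ p, B, S, P, D => hasImpR _ _ p B S P D

/-- `hasOrL p B D S P` holds when an ∨-L rule with upper sequents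
`B,S → P` and `D,S → P` and lower sequent `B∨D,S → P` occurs in `p`. -/
def hasOrL : ∀ (Γ Δ : Multiset Fm), CProof Γ Δ → Fm → Fm → Multiset Fm → Multiset Fm → Prop
  | _, _, ax _, _, _, _, _ => False
  | _, _, contrL p, B, D, S, P => hasOrL _ _ p B D S P
  | _, _, contrR p, B, D, S, P => hasOrL _ _ p B D S P
  | _, _, botR p, B, D, S, P => hasOrL _ _ p B D S P
  | _, _, andL p, B, D, S, P => hasOrL _ _ p B D S P
  | _, _, andR p q, B, D, S, P => hasOrL _ _ p B D S P ∨ hasOrL _ _ q B D S P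
  | _, _, @orL B' D' Γ' Δ' p q, B, D, S, P =>
      (B' = B ∧ D' = D ∧ Γ' = S ∧ Δ' = P) ∨ hasOrL _ _ p B D S P ∨ hasOrL _ _ q B D S P
  | _, _, orR1 p, B, D, S, P => hasOrL _ _ p B D S P
  | _, _, orR2 p, B, D, S, P => hasOrL _ _ p B D S P
  | _, _, impL p q, B, D, S, P => hasOrL _ _ p B D S P ∨ hasOrL _ _ q B D S P
  | _, _, impR p, B, D, S, P => hasOrL _ _ p B D S P
  | _, _, allL _ p, B, D, S, P => hasOrL _ _ p B D S P
  | _, _, exR _ p, B, D, S, P => hasOrL _ _ p B D S P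
  | _, _, exL _ _ p, B, D, S, P => hasOrL _ _ p B D S P
  | _, _, allR _ _ p, B, D, S, P => hasOrL _ _ p B D S P

/-- Every formula in `Δ` is atomic or ⊥. -/
def neutralM (Δ : Multiset Fm) : Prop := ∀ F ∈ Δ, F.neutral

/-- A uniform proof: an I-proof in which any sequent whose succedent contains
a non-atomic formula occurs only as the lower sequent of an inference rule
that introduces the top-level logical symbol of that formula. -/
def isUniform : ∀ (Γ Δ : Multiset Fm), CProof Γ Δ → Prop
  | _, _, @ax _ Δ _ => Multiset.card Δ = 1
  | _, _, @contrL _ _ Δ p => Multiset.card Δ = 1 ∧ neutralM Δ ∧ isUniform _ _ p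
  | _, _, @contrR B _ Δ p =>
      Multiset.card (B ::ₘ Δ) = 1 ∧ neutralM (B ::ₘ Δ) ∧ isUniform _ _ p
  | _, _, @botR D _ Δ p =>
      Multiset.card (D ::ₘ Δ) = 1 ∧ neutralM (D ::ₘ Δ) ∧ isUniform _ _ p
  | _, _, @andL _ _ _ Δ p => Multiset.card Δ = 1 ∧ neutralM Δ ∧ isUniform _ _ p
  | _, _, @andR B D _ Δ p q =>
      Multiset.card ((B.conj D) ::ₘ Δ) = 1 ∧ isUniform _ _ p ∧ isUniform _ _ q
  | _, _, @orL _ _ _ Δ p q =>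
      Multiset.card Δ = 1 ∧ neutralM Δ ∧ isUniform _ _ p ∧ isUniform _ _ q
  | _, _, @orR1 B D _ Δ p => Multiset.card ((B.disj D) ::ₘ Δ) = 1 ∧ isUniform _ _ p
  | _, _, @orR2 B D _ Δ p => Multiset.card ((B.disj D) ::ₘ Δ) = 1 ∧ isUniform _ _ p
  | _, _, @impL _ _ _ Δ Θ p q =>
      Multiset.card (Δ + Θ) = 1 ∧ neutralM (Δ + Θ) ∧ isUniform _ _ p ∧ isUniform _ _ q
  | _, _, @impR B D _ Δ p => Multiset.card ((B.imp D) ::ₘ Δ) = 1 ∧ isUniform _ _ p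
  | _, _, @allL _ _ Δ _ p => Multiset.card Δ = 1 ∧ neutralM Δ ∧ isUniform _ _ p
  | _, _, @exR B _ Δ _ p => Multiset.card ((Fm.ex B) ::ₘ Δ) = 1 ∧ isUniform _ _ p
  | _, _, @exL _ _ Δ _ _ p => Multiset.card Δ = 1 ∧ neutralM Δ ∧ isUniform _ _ p
  | _, _, @allR B _ Δ _ _ p => Multiset.card ((Fm.all B) ::ₘ Δ) = 1 ∧ isUniform _ _ p

end CProof

/-- Uniform provability: `Γ ⊢_O F`. -/
def UProv (Γ : Multiset Fm) (F : Fm) : Prop :=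
  ∃ p : CProof Γ ({F} : Multiset Fm), p.isUniform

/-- The ordering ⪰ measuring the strength of formulas as assumptions. -/
inductive Fm.ge : Fm → Fm → Prop
  | refl (F : Fm) : Fm.ge F F
  | imp {F A B : Fm} : Fm.ge F B → Fm.ge F (Fm.imp A B)
  | disjl {F A B : Fm} : Fm.ge F A → Fm.ge F (Fm.disj A B)
  | disjr {F A B : Fm} : Fm.ge F B → Fm.ge F (Fm.disj A B)
  | ex {F P : Fm} (c : ℕ) : Fm.ge F (P.inst (Tm.const c)) → Fm.ge F (Fm.ex P)

/-- `MsGe Γ₁ Γ₂`: there is an injective map κ from `Γ₂` into `Γ₁` with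
`κ(F) ⪰ F` for every `F ∈ Γ₂`. -/
def MsGe (Γ₁ Γ₂ : Multiset Fm) : Prop :=
  ∃ Γ' ≤ Γ₁, Multiset.Rel Fm.ge Γ' Γ₂

mutual
  /-- G-formulas: G ::= ⊤ | ⊥ | A | G∧G | G∨G | D⊃G | ∃x G. -/
  inductive GFm : Fm → Prop
    | top : GFm Fm.top
    | bot : GFm Fm.bot
    | atom {p : ℕ} {ts : List Tm} : GFm (Fm.atom p ts)
    | conj {a b : Fm} : GFm a → GFm b → GFm (Fm.conj a b)
    | disj {a b : Fm} : GFm a → GFm b → GFm (Fm.disj a b)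
    | imp {a b : Fm} : DFm a → GFm b → GFm (Fm.imp a b)
    | ex {a : Fm} : GFm a → GFm (Fm.ex a)

  /-- D-formulas: D ::= ⊤ | ⊥ | A | G⊃D | D∧D | D∨D | ∃x D | ∀x D. -/
  inductive DFm : Fm → Prop
    | top : DFm Fm.top
    | bot : DFm Fm.bot
    | atom {p : ℕ} {ts : List Tm} : DFm (Fm.atom p ts)
    | imp {a b : Fm} : GFm a → DFm b → DFm (Fm.imp a b)
    | conj {a b : Fm} : DFm a → DFm b → DFm (Fm.conj a b)
    | disj {a b : Fm} : DFm a → DFm b → DFm (Fm.disj a b)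
    | ex {a : Fm} : DFm a → DFm (Fm.ex a)
    | all {a : Fm} : DFm a → DFm (Fm.all a)
end
/-- I_G-proofs: derivations in the intuitionistic sequent calculus (single
succedent formula) augmented with the derived rules ∨-L_G and res_G, in which
the eigenvariable proviso on ∃-L and ∀-R also disallows constants in `G`. -/
inductive IGProof (G : Fm) : Multiset Fm → Fm → Type
  | ax {Γ : Multiset Fm} {F : Fm} (h : AxSeq Γ ({F} : Multiset Fm)) : IGProof G Γ F
  | contrL {B : Fm} {Γ : Multiset Fm} {F : Fm} (p : IGProof G (B ::ₘ B ::ₘ Γ) F) :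
      IGProof G (B ::ₘ Γ) F
  | botR {Γ : Multiset Fm} {F : Fm} (p : IGProof G Γ Fm.bot) : IGProof G Γ F
  | andL {B D : Fm} {Γ : Multiset Fm} {F : Fm}
      (p : IGProof G (B ::ₘ D ::ₘ (B.conj D) ::ₘ Γ) F) : IGProof G ((B.conj D) ::ₘ Γ) F
  | andR {B D : Fm} {Γ : Multiset Fm} (p : IGProof G Γ B) (q : IGProof G Γ D) :
      IGProof G Γ (B.conj D)
  | orL {B D : Fm} {Γ : Multiset Fm} {F : Fm} (p : IGProof G (B ::ₘ Γ) F)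
      (q : IGProof G (D ::ₘ Γ) F) : IGProof G ((B.disj D) ::ₘ Γ) F
  | orR1 {B D : Fm} {Γ : Multiset Fm} (p : IGProof G Γ B) : IGProof G Γ (B.disj D)
  | orR2 {B D : Fm} {Γ : Multiset Fm} (p : IGProof G Γ D) : IGProof G Γ (B.disj D)
  | impL {B D : Fm} {Γ : Multiset Fm} {F : Fm} (p : IGProof G ((B.imp D) ::ₘ Γ) B)
      (q : IGProof G (D ::ₘ Γ) F) : IGProof G ((B.imp D) ::ₘ Γ) F
  | impR {B D : Fm} {Γ : Multiset Fm} (p : IGProof G (B ::ₘ Γ) D) : IGProof G Γ (B.imp D)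
  | allL {B : Fm} {Γ : Multiset Fm} {F : Fm} (t : Tm)
      (p : IGProof G ((B.inst t) ::ₘ (Fm.all B) ::ₘ Γ) F) : IGProof G ((Fm.all B) ::ₘ Γ) F
  | exR {B : Fm} {Γ : Multiset Fm} (t : Tm) (p : IGProof G Γ (B.inst t)) :
      IGProof G Γ (Fm.ex B)
  | exL {B : Fm} {Γ : Multiset Fm} {F : Fm} (c : ℕ)
      (hc : FreshSeq c ((Fm.ex B) ::ₘ Γ) ({F} : Multiset Fm)) (hG : ¬ G.constIn c)
      (p : IGProof G ((B.inst (Tm.const c)) ::ₘ Γ) F) : IGProof G ((Fm.ex B) ::ₘ Γ) F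
  | allR {B : Fm} {Γ : Multiset Fm} (c : ℕ)
      (hc : FreshSeq c Γ ({Fm.all B} : Multiset Fm)) (hG : ¬ G.constIn c)
      (p : IGProof G Γ (B.inst (Tm.const c))) : IGProof G Γ (Fm.all B)
  | orLG {B D : Fm} {Γ : Multiset Fm} {F : Fm} (p : IGProof G (B ::ₘ Γ) F)
      (q : IGProof G (D ::ₘ Γ) G) : IGProof G ((B.disj D) ::ₘ Γ) F
  | resG {Γ : Multiset Fm} {F : Fm} (p : IGProof G Γ G) : IGProof G Γ F

namespace IGProof

/-- The number of occurrences of the ∨-L rule in an I_G-proof. -/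
def orLCount : ∀ (G : Fm) (Γ : Multiset Fm) (F : Fm), IGProof G Γ F → ℕ
  | _, _, _, ax _ => 0
  | _, _, _, contrL p => orLCount _ _ _ p
  | _, _, _, botR p => orLCount _ _ _ p
  | _, _, _, andL p => orLCount _ _ _ p
  | _, _, _, andR p q => orLCount _ _ _ p + orLCount _ _ _ q
  | _, _, _, orL p q => orLCount _ _ _ p + orLCount _ _ _ q + 1
  | _, _, _, orR1 p => orLCount _ _ _ p
  | _, _, _, orR2 p => orLCount _ _ _ p
  | _, _, _, impL p q => orLCount _ _ _ p + orLCount _ _ _ q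
  | _, _, _, impR p => orLCount _ _ _ p
  | _, _, _, allL _ p => orLCount _ _ _ p
  | _, _, _, exR _ p => orLCount _ _ _ p
  | _, _, _, exL _ _ _ p => orLCount _ _ _ p
  | _, _, _, allR _ _ _ p => orLCount _ _ _ p
  | _, _, _, orLG p q => orLCount _ _ _ p + orLCount _ _ _ q
  | _, _, _, resG p => orLCount _ _ _ p

/-- The height of an I_G-proof: the length of its longest branch. -/
def height : ∀ (G : Fm) (Γ : Multiset Fm) (F : Fm), IGProof G Γ F → ℕ
  | _, _, _, ax _ => 1
  | _, _, _, contrL p => height _ _ _ p + 1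
  | _, _, _, botR p => height _ _ _ p + 1
  | _, _, _, andL p => height _ _ _ p + 1
  | _, _, _, andR p q => max (height _ _ _ p) (height _ _ _ q) + 1
  | _, _, _, orL p q => max (height _ _ _ p) (height _ _ _ q) + 1
  | _, _, _, orR1 p => height _ _ _ p + 1
  | _, _, _, orR2 p => height _ _ _ p + 1
  | _, _, _, impL p q => max (height _ _ _ p) (height _ _ _ q) + 1
  | _, _, _, impR p => height _ _ _ p + 1
  | _, _, _, allL _ p => height _ _ _ p + 1
  | _, _, _, exR _ p => height _ _ _ p + 1
  | _, _, _, exL _ _ _ p => height _ _ _ p + 1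
  | _, _, _, allR _ _ _ p => height _ _ _ p + 1
  | _, _, _, orLG p q => max (height _ _ _ p) (height _ _ _ q) + 1
  | _, _, _, resG p => height _ _ _ p + 1

/-- The number of sequents appearing in an I_G-proof. -/
def size : ∀ (G : Fm) (Γ : Multiset Fm) (F : Fm), IGProof G Γ F → ℕ
  | _, _, _, ax _ => 1
  | _, _, _, contrL p => size _ _ _ p + 1
  | _, _, _, botR p => size _ _ _ p + 1
  | _, _, _, andL p => size _ _ _ p + 1
  | _, _, _, andR p q => size _ _ _ p + size _ _ _ q + 1
  | _, _, _, orL p q => size _ _ _ p + size _ _ _ q + 1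
  | _, _, _, orR1 p => size _ _ _ p + 1
  | _, _, _, orR2 p => size _ _ _ p + 1
  | _, _, _, impL p q => size _ _ _ p + size _ _ _ q + 1
  | _, _, _, impR p => size _ _ _ p + 1
  | _, _, _, allL _ p => size _ _ _ p + 1
  | _, _, _, exR _ p => size _ _ _ p + 1
  | _, _, _, exL _ _ _ p => size _ _ _ p + 1
  | _, _, _, allR _ _ _ p => size _ _ _ p + 1
  | _, _, _, orLG p q => size _ _ _ p + size _ _ _ q + 1
  | _, _, _, resG p => size _ _ _ p + 1

/-- O_G-proofs: I_G-proofs containing no occurrence of the ∨-L rule, in which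
any sequent whose succedent contains a non-atomic formula occurs only as the
lower sequent of a rule introducing the top-level symbol of that formula. -/
def isOG : ∀ (G : Fm) (Γ : Multiset Fm) (F : Fm), IGProof G Γ F → Prop
  | _, _, _, ax _ => True
  | _, _, _, @contrL _ _ _ F p => F.neutral ∧ isOG _ _ _ p
  | _, _, _, @botR _ _ F p => F.neutral ∧ isOG _ _ _ p
  | _, _, _, @andL _ _ _ _ F p => F.neutral ∧ isOG _ _ _ p
  | _, _, _, andR p q => isOG _ _ _ p ∧ isOG _ _ _ q
  | _, _, _, orL _ _ => False
  | _, _, _, orR1 p => isOG _ _ _ p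
  | _, _, _, orR2 p => isOG _ _ _ p
  | _, _, _, @impL _ _ _ _ F p q => F.neutral ∧ isOG _ _ _ p ∧ isOG _ _ _ q
  | _, _, _, impR p => isOG _ _ _ p
  | _, _, _, @allL _ _ _ F _ p => F.neutral ∧ isOG _ _ _ p
  | _, _, _, exR _ p => isOG _ _ _ p
  | _, _, _, @exL _ _ _ F _ _ _ p => F.neutral ∧ isOG _ _ _ p
  | _, _, _, allR _ _ _ p => isOG _ _ _ p
  | _, _, _, @orLG _ _ _ _ F p q => F.neutral ∧ isOG _ _ _ p ∧ isOG _ _ _ q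
  | _, _, _, @resG _ _ F p => F.neutral ∧ isOG _ _ _ p

/-- `hasOrL p B D S F` holds when an ∨-L rule with upper sequents `B,S → F`
and `D,S → F` and lower sequent `B∨D,S → F` occurs in the I_G-proof `p`. -/
def hasOrL : ∀ (G : Fm) (Γ : Multiset Fm) (W : Fm), IGProof G Γ W →
    Fm → Fm → Multiset Fm → Fm → Prop
  | _, _, _, ax _, _, _, _, _ => False
  | _, _, _, contrL p, B, D, S, F => hasOrL _ _ _ p B D S F
  | _, _, _, botR p, B, D, S, F => hasOrL _ _ _ p B D S F
  | _, _, _, andL p, B, D, S, F => hasOrL _ _ _ p B D S F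
  | _, _, _, andR p q, B, D, S, F => hasOrL _ _ _ p B D S F ∨ hasOrL _ _ _ q B D S F
  | _, _, _, @orL _ B' D' Γ' F' p q, B, D, S, F =>
      (B' = B ∧ D' = D ∧ Γ' = S ∧ F' = F) ∨ hasOrL _ _ _ p B D S F ∨ hasOrL _ _ _ q B D S F
  | _, _, _, orR1 p, B, D, S, F => hasOrL _ _ _ p B D S F
  | _, _, _, orR2 p, B, D, S, F => hasOrL _ _ _ p B D S F
  | _, _, _, impL p q, B, D, S, F => hasOrL _ _ _ p B D S F ∨ hasOrL _ _ _ q B D S F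
  | _, _, _, impR p, B, D, S, F => hasOrL _ _ _ p B D S F
  | _, _, _, allL _ p, B, D, S, F => hasOrL _ _ _ p B D S F
  | _, _, _, exR _ p, B, D, S, F => hasOrL _ _ _ p B D S F
  | _, _, _, exL _ _ _ p, B, D, S, F => hasOrL _ _ _ p B D S F
  | _, _, _, allR _ _ _ p, B, D, S, F => hasOrL _ _ _ p B D S F
  | _, _, _, orLG p q, B, D, S, F => hasOrL _ _ _ p B D S F ∨ hasOrL _ _ _ q B D S F
  | _, _, _, resG p, B, D, S, F => hasOrL _ _ _ p B D S F

end IGProof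

/-- In the simplified syntax, `A` ranges over atomic formulas together with
⊤ and ⊥. -/
def AtFm (F : Fm) : Prop := F.isAtom ∨ F = Fm.top ∨ F = Fm.bot

/-- `disjs A [B₁,…,Bₙ]` is the disjunction `A ∨ B₁ ∨ … ∨ Bₙ`. -/
def disjs (A : Fm) : List Fm → Fm
  | [] => A
  | B :: l => Fm.disj A (disjs B l)

mutual
  /-- Goals in the simplified syntax: G ::= A | G∧G | G∨G | D⊃G | ∃x G. -/
  inductive Goal : Fm → Prop
    | atm {A : Fm} : AtFm A → Goal A
    | conj {a b : Fm} : Goal a → Goal b → Goal (Fm.conj a b)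
    | disj {a b : Fm} : Goal a → Goal b → Goal (Fm.disj a b)
    | imp {a b : Fm} : PCl a → Goal b → Goal (Fm.imp a b)
    | ex {a : Fm} : Goal a → Goal (Fm.ex a)

  /-- Program clauses in the simplified syntax:
  D ::= (A∨…∨A) | G⊃(A∨…∨A) | ∀x D. -/
  inductive PCl : Fm → Prop
    | head {A : Fm} {l : List Fm} : AtFm A → (∀ B ∈ l, AtFm B) → PCl (disjs A l)
    | impHead {g A : Fm} {l : List Fm} : Goal g → AtFm A → (∀ B ∈ l, AtFm B) →
        PCl (Fm.imp g (disjs A l))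
    | all {d : Fm} : PCl d → PCl (Fm.all d)
end

/-- The instances `[D]` of a program clause `D`, as pairs whose first
component is `∅` (`none`) or `{G}` (`some G`) and whose second component is
the collection of head atoms. -/
inductive ClInst : Fm → Option Fm → Multiset Fm → Prop
  | head {A : Fm} {l : List Fm} : AtFm A → (∀ B ∈ l, AtFm B) →
      ClInst (disjs A l) none (A ::ₘ (l : Multiset Fm))
  | impHead {g A : Fm} {l : List Fm} : Goal g → AtFm A → (∀ B ∈ l, AtFm B) →
      ClInst (Fm.imp g (disjs A l)) (some g) (A ::ₘ (l : Multiset Fm))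
  | all {d : Fm} {o : Option Fm} {m : Multiset Fm} (t : Tm) :
      ClInst (d.inst t) o m → ClInst (Fm.all d) o m

/-- `[Γ]`: the instances of the clauses in `Γ`. -/
def GammaInst (Γ : Multiset Fm) (o : Option Fm) (m : Multiset Fm) : Prop :=
  ∃ D ∈ Γ, ClInst D o m

/-- The reduced proof system relative to the goal `G`: axioms `Δ → ⊤`, the
rules RESTART, ATOMIC and BACKCHAIN relativized to `G`, and ∨-R, ∧-R, ⊃-R
and ∃-R. -/
inductive RP (G : Fm) : Multiset Fm → Fm → Prop
  | topAx {Γ : Multiset Fm} : RP G Γ Fm.top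
  | restart {Γ : Multiset Fm} {C : Fm} (hC : C.isAtom ∨ C = Fm.bot) (p : RP G Γ G) :
      RP G Γ C
  | atomic {Γ : Multiset Fm} {C : Fm} {m : Multiset Fm} (hC : C.isAtom ∨ C = Fm.bot)
      (h : GammaInst Γ none (C ::ₘ m) ∨ GammaInst Γ none (Fm.bot ::ₘ m))
      (ps : ∀ A ∈ m, RP G (A ::ₘ Γ) G) : RP G Γ C
  | backchain {Γ : Multiset Fm} {C G' : Fm} {m : Multiset Fm}
      (hC : C.isAtom ∨ C = Fm.bot)
      (h : GammaInst Γ (some G') (C ::ₘ m) ∨ GammaInst Γ (some G') (Fm.bot ::ₘ m))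
      (p : RP G Γ G') (ps : ∀ A ∈ m, RP G (A ::ₘ Γ) G) : RP G Γ C
  | orR1 {Γ : Multiset Fm} {B D : Fm} (p : RP G Γ B) : RP G Γ (B.disj D)
  | orR2 {Γ : Multiset Fm} {B D : Fm} (p : RP G Γ D) : RP G Γ (B.disj D)
  | andR {Γ : Multiset Fm} {B D : Fm} (p : RP G Γ B) (q : RP G Γ D) : RP G Γ (B.conj D)
  | impR {Γ : Multiset Fm} {B D : Fm} (p : RP G (B ::ₘ Γ) D) : RP G Γ (B.imp D)
  | exR {Γ : Multiset Fm} {B : Fm} (t : Tm) (p : RP G Γ (B.inst t)) : RP G Γ (Fm.ex B)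

/-! ### Auxiliary development for statement_16 -/

namespace St16

/-- Size of a formula (atoms count 1). -/
def fsz : Fm → ℕ
  | Fm.top => 1
  | Fm.bot => 1
  | Fm.atom _ _ => 1
  | Fm.conj a b => fsz a + fsz b + 1
  | Fm.disj a b => fsz a + fsz b + 1
  | Fm.imp a b => fsz a + fsz b + 1
  | Fm.ex a => fsz a + 1
  | Fm.all a => fsz a + 1

theorem fsz_subst (k : ℕ) (u : Tm) (A : Fm) : fsz (Fm.subst k u A) = fsz A := by
  induction A generalizing k with
  | top => rfl
  | bot => rfl
  | atom p ts => rfl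
  | conj a b iha ihb => simp [Fm.subst, fsz, iha, ihb]
  | disj a b iha ihb => simp [Fm.subst, fsz, iha, ihb]
  | imp a b iha ihb => simp [Fm.subst, fsz, iha, ihb]
  | ex a iha => simp [Fm.subst, fsz, iha]
  | all a iha => simp [Fm.subst, fsz, iha]

theorem fsz_inst (u : Tm) (A : Fm) : fsz (Fm.inst u A) = fsz A := fsz_subst 0 u A

theorem fsz_pos (A : Fm) : 0 < fsz A := by cases A <;> simp [fsz]

/-- Bound on constants of a term. -/
def tB : Tm → ℕ
  | Tm.var _ => 0
  | Tm.const c => c + 1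

theorem tB_lt {c : ℕ} {t : Tm} (h : Tm.constIn c t) : c < tB t := by
  cases t with
  | var n => exact absurd h (by simp [Tm.constIn])
  | const d => cases h; simp [tB]

/-- Bound on constants of a formula. -/
def fB : Fm → ℕ
  | Fm.top => 0
  | Fm.bot => 0
  | Fm.atom _ ts => (ts.map tB).foldr max 0
  | Fm.conj a b => max (fB a) (fB b)
  | Fm.disj a b => max (fB a) (fB b)
  | Fm.imp a b => max (fB a) (fB b)
  | Fm.ex a => fB a
  | Fm.all a => fB a

theorem fB_lt {c : ℕ} {A : Fm} (h : Fm.constIn c A) : c < fB A := by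
  induction A with
  | top => exact absurd h (by simp [Fm.constIn])
  | bot => exact absurd h (by simp [Fm.constIn])
  | atom p ts =>
      obtain ⟨t, ht, hc⟩ := h
      have : tB t ≤ (ts.map tB).foldr max 0 := by
        clear hc
        induction ts with
        | nil => cases ht
        | cons s l ih =>
            rcases List.mem_cons.1 ht with rfl | ht'
            · exact le_max_left _ _
            · exact le_trans (ih ht') (le_max_right _ _)
      exact lt_of_lt_of_le (tB_lt hc) this
  | conj a b iha ihb =>
      rcases h with h | h
      · exact lt_of_lt_of_le (iha h) (le_max_left _ _)
      · exact lt_of_lt_of_le (ihb h) (le_max_right _ _)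
  | disj a b iha ihb =>
      rcases h with h | h
      · exact lt_of_lt_of_le (iha h) (le_max_left _ _)
      · exact lt_of_lt_of_le (ihb h) (le_max_right _ _)
  | imp a b iha ihb =>
      rcases h with h | h
      · exact lt_of_lt_of_le (iha h) (le_max_left _ _)
      · exact lt_of_lt_of_le (ihb h) (le_max_right _ _)
  | ex a iha => exact iha h
  | all a iha => exact iha h

theorem not_constIn_of_fB_le {c : ℕ} {A : Fm} (h : fB A ≤ c) : ¬ Fm.constIn c A :=
  fun hc => absurd (fB_lt hc) (not_lt.2 h)

/-- Bound on the constants of a multiset of formulas. -/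
def msB (S : Multiset Fm) : ℕ := (S.map fB).sum

theorem msB_fresh {c : ℕ} {S : Multiset Fm} (h : msB S ≤ c) :
    ∀ F ∈ S, ¬ Fm.constIn c F := by
  intro F hF
  apply not_constIn_of_fB_le
  refine le_trans ?_ h
  exact Multiset.single_le_sum (fun x _ => Nat.zero_le x) _ (Multiset.mem_map_of_mem _ hF)

theorem msB_cons (A : Fm) (S : Multiset Fm) : msB (A ::ₘ S) = fB A + msB S := by
  simp [msB]

theorem msB_mono {S S' : Multiset Fm} (h : S ≤ S') : msB S ≤ msB S' := by
  obtain ⟨u, rfl⟩ := Multiset.le_iff_exists_add.1 h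
  simp [msB]

/-- Renaming of constants. -/
def tmap (f : ℕ → ℕ) : Tm → Tm
  | Tm.var n => Tm.var n
  | Tm.const c => Tm.const (f c)

def fmap (f : ℕ → ℕ) : Fm → Fm
  | Fm.top => Fm.top
  | Fm.bot => Fm.bot
  | Fm.atom p ts => Fm.atom p (ts.map (tmap f))
  | Fm.conj a b => Fm.conj (fmap f a) (fmap f b)
  | Fm.disj a b => Fm.disj (fmap f a) (fmap f b)
  | Fm.imp a b => Fm.imp (fmap f a) (fmap f b)
  | Fm.ex a => Fm.ex (fmap f a)
  | Fm.all a => Fm.all (fmap f a)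

theorem tmap_subst (f : ℕ → ℕ) (k : ℕ) (u t : Tm) :
    tmap f (Tm.subst k u t) = Tm.subst k (tmap f u) (tmap f t) := by
  cases t with
  | var n => by_cases h : n = k <;> simp [Tm.subst, tmap, h]
  | const c => simp [Tm.subst, tmap]

theorem fmap_subst (f : ℕ → ℕ) (k : ℕ) (u : Tm) (A : Fm) :
    fmap f (Fm.subst k u A) = Fm.subst k (tmap f u) (fmap f A) := by
  induction A generalizing k with
  | top => rfl
  | bot => rfl
  | atom p ts => simp [Fm.subst, fmap, List.map_map, Function.comp, tmap_subst]
  | conj a b iha ihb => simp [Fm.subst, fmap, iha, ihb]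
  | disj a b iha ihb => simp [Fm.subst, fmap, iha, ihb]
  | imp a b iha ihb => simp [Fm.subst, fmap, iha, ihb]
  | ex a iha => simp [Fm.subst, fmap, iha]
  | all a iha => simp [Fm.subst, fmap, iha]

theorem fmap_inst (f : ℕ → ℕ) (u : Tm) (A : Fm) :
    fmap f (Fm.inst u A) = Fm.inst (tmap f u) (fmap f A) := fmap_subst f 0 u A

theorem fmap_inst_const (f : ℕ → ℕ) (c : ℕ) (A : Fm) :
    fmap f (Fm.inst (Tm.const c) A) = Fm.inst (Tm.const (f c)) (fmap f A) :=
  fmap_inst f _ A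

theorem tmap_congr {f g : ℕ → ℕ} {t : Tm} (h : ∀ c, Tm.constIn c t → f c = g c) :
    tmap f t = tmap g t := by
  cases t with
  | var n => rfl
  | const c => simp [tmap, h c rfl]

theorem fmap_congr {f g : ℕ → ℕ} {A : Fm} (h : ∀ c, Fm.constIn c A → f c = g c) :
    fmap f A = fmap g A := by
  induction A with
  | top => rfl
  | bot => rfl
  | atom p ts =>
      simp only [fmap, Fm.atom.injEq, true_and]
      apply List.map_congr_left
      intro t ht
      exact tmap_congr (fun c hc => h c ⟨t, ht, hc⟩)
  | conj a b iha ihb =>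
      simp only [fmap, Fm.conj.injEq]
      exact ⟨iha fun c hc => h c (Or.inl hc), ihb fun c hc => h c (Or.inr hc)⟩
  | disj a b iha ihb =>
      simp only [fmap, Fm.disj.injEq]
      exact ⟨iha fun c hc => h c (Or.inl hc), ihb fun c hc => h c (Or.inr hc)⟩
  | imp a b iha ihb =>
      simp only [fmap, Fm.imp.injEq]
      exact ⟨iha fun c hc => h c (Or.inl hc), ihb fun c hc => h c (Or.inr hc)⟩
  | ex a iha => simp only [fmap, Fm.ex.injEq]; exact iha fun c hc => h c hc
  | all a iha => simp only [fmap, Fm.all.injEq]; exact iha fun c hc => h c hc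

theorem tmap_id (t : Tm) : tmap id t = t := by cases t <;> simp [tmap]

theorem fmap_id (A : Fm) : fmap id A = A := by
  induction A with
  | top => rfl
  | bot => rfl
  | atom p ts => simp [fmap, List.map_congr_left fun t _ => tmap_id t]
  | conj a b iha ihb => simp [fmap, iha, ihb]
  | disj a b iha ihb => simp [fmap, iha, ihb]
  | imp a b iha ihb => simp [fmap, iha, ihb]
  | ex a iha => simp [fmap, iha]
  | all a iha => simp [fmap, iha]

theorem fmap_fix {f : ℕ → ℕ} {A : Fm} (h : ∀ c, Fm.constIn c A → f c = c) :
    fmap f A = A := by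
  rw [fmap_congr (g := id) h, fmap_id]

theorem fmap_fresh {f : ℕ → ℕ} {c : ℕ} {A : Fm} (hc : ¬ Fm.constIn c A)
    (hf : ∀ d, d ≠ c → f d = d) : fmap f A = A := by
  apply fmap_fix
  intro d hd
  apply hf
  rintro rfl; exact hc hd

theorem constIn_tmap {d : ℕ} {f : ℕ → ℕ} {t : Tm} (h : Tm.constIn d (tmap f t)) :
    ∃ c, Tm.constIn c t ∧ f c = d := by
  cases t with
  | var n => exact absurd h (by simp [tmap, Tm.constIn])
  | const e => exact ⟨e, rfl, h⟩

theorem constIn_fmap {d : ℕ} {f : ℕ → ℕ} {A : Fm} (h : Fm.constIn d (fmap f A)) :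
    ∃ c, Fm.constIn c A ∧ f c = d := by
  induction A with
  | top => exact absurd h (by simp [fmap, Fm.constIn])
  | bot => exact absurd h (by simp [fmap, Fm.constIn])
  | atom p ts =>
      obtain ⟨t, ht, hc⟩ := h
      obtain ⟨s, hs, rfl⟩ := List.mem_map.1 ht
      obtain ⟨c, hc1, hc2⟩ := constIn_tmap hc
      exact ⟨c, ⟨s, hs, hc1⟩, hc2⟩
  | conj a b iha ihb =>
      rcases h with h | h
      · obtain ⟨c, h1, h2⟩ := iha h; exact ⟨c, Or.inl h1, h2⟩
      · obtain ⟨c, h1, h2⟩ := ihb h; exact ⟨c, Or.inr h1, h2⟩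
  | disj a b iha ihb =>
      rcases h with h | h
      · obtain ⟨c, h1, h2⟩ := iha h; exact ⟨c, Or.inl h1, h2⟩
      · obtain ⟨c, h1, h2⟩ := ihb h; exact ⟨c, Or.inr h1, h2⟩
  | imp a b iha ihb =>
      rcases h with h | h
      · obtain ⟨c, h1, h2⟩ := iha h; exact ⟨c, Or.inl h1, h2⟩
      · obtain ⟨c, h1, h2⟩ := ihb h; exact ⟨c, Or.inr h1, h2⟩
  | ex a iha => obtain ⟨c, h1, h2⟩ := iha h; exact ⟨c, h1, h2⟩
  | all a iha => obtain ⟨c, h1, h2⟩ := iha h; exact ⟨c, h1, h2⟩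

theorem neutral_cases (A : Fm) (h : A.neutral) :
    (∃ p ts, A = Fm.atom p ts) ∨ A = Fm.bot := by
  rcases h with h | h
  · cases A <;> simp [Fm.isAtom] at h ⊢
  · exact Or.inr h

theorem neutral_atom (p : ℕ) (ts : List Tm) : (Fm.atom p ts).neutral := Or.inl trivial

theorem neutral_bot : (Fm.bot).neutral := Or.inr rfl

end St16

namespace St16

deriving instance DecidableEq for Tm
deriving instance DecidableEq for Fm

/-! ### The ordering ⪰ and its lifting to multisets -/

theorem ge_trans {a b c : Fm} (h1 : Fm.ge a b) (h2 : Fm.ge b c) : Fm.ge a c := by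
  induction h2 with
  | refl => exact h1
  | imp _ ih => exact Fm.ge.imp ih
  | disjl _ ih => exact Fm.ge.disjl ih
  | disjr _ ih => exact Fm.ge.disjr ih
  | ex c _ ih => exact Fm.ge.ex c ih

instance : IsTrans Fm Fm.ge := ⟨fun _ _ _ => ge_trans⟩

theorem ge_neutral {F C : Fm} (hC : C.neutral) (h : Fm.ge F C) : F = C := by
  rcases neutral_cases C hC with ⟨p, ts, rfl⟩ | rfl <;> cases h <;> rfl

theorem ge_conj {F X Y : Fm} (h : Fm.ge F (X.conj Y)) : F = X.conj Y := by
  cases h; rfl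

theorem ge_all {F P : Fm} (h : Fm.ge F (Fm.all P)) : F = Fm.all P := by
  cases h; rfl

theorem ge_top {F : Fm} (h : Fm.ge F Fm.top) : F = Fm.top := by cases h; rfl

theorem ge_imp {F X Y : Fm} (h : Fm.ge F (X.imp Y)) : F = X.imp Y ∨ Fm.ge F Y := by
  cases h with
  | refl => exact Or.inl rfl
  | imp h => exact Or.inr h

theorem ge_disj {F X Y : Fm} (h : Fm.ge F (X.disj Y)) :
    F = X.disj Y ∨ Fm.ge F X ∨ Fm.ge F Y := by
  cases h with
  | refl => exact Or.inl rfl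
  | disjl h => exact Or.inr (Or.inl h)
  | disjr h => exact Or.inr (Or.inr h)

theorem ge_ex {F P : Fm} (h : Fm.ge F (Fm.ex P)) :
    F = Fm.ex P ∨ ∃ c, Fm.ge F (P.inst (Tm.const c)) := by
  cases h with
  | refl => exact Or.inl rfl
  | ex c h => exact Or.inr ⟨c, h⟩

/-- `SGe S T` : `S` is at least as strong a multiset of assumptions as `T`. -/
def SGe (S T : Multiset Fm) : Prop := ∃ S', S' ≤ S ∧ Multiset.Rel Fm.ge S' T

theorem rel_ge_refl (S : Multiset Fm) : Multiset.Rel Fm.ge S S := by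
  induction S using Multiset.induction_on with
  | empty => simp
  | cons a S ih => exact Multiset.Rel.cons (Fm.ge.refl a) ih

theorem SGe.refl (S : Multiset Fm) : SGe S S := ⟨S, le_refl _, rel_ge_refl S⟩

theorem SGe.zero (S : Multiset Fm) : SGe S 0 := ⟨0, Multiset.zero_le _, by simp⟩

theorem SGe.ofLe {S T : Multiset Fm} (h : T ≤ S) : SGe S T := ⟨T, h, rel_ge_refl T⟩

theorem SGe.consCons {a b : Fm} {S T : Multiset Fm} (hab : Fm.ge a b) (h : SGe S T) :
    SGe (a ::ₘ S) (b ::ₘ T) := by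
  obtain ⟨S', hle, hrel⟩ := h
  exact ⟨a ::ₘ S', Multiset.cons_le_cons a hle, Multiset.Rel.cons hab hrel⟩

theorem SGe.cons {a : Fm} {S T : Multiset Fm} (h : SGe S T) : SGe (a ::ₘ S) T := by
  obtain ⟨S', hle, hrel⟩ := h
  exact ⟨S', le_trans hle (Multiset.le_cons_self _ _), hrel⟩

theorem SGe.moreL {S S₂ T : Multiset Fm} (h : SGe S T) (hle : S ≤ S₂) : SGe S₂ T := by
  obtain ⟨S', hle', hrel⟩ := h
  exact ⟨S', le_trans hle' hle, hrel⟩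

theorem SGe.dropR {b : Fm} {S T : Multiset Fm} (h : SGe S (b ::ₘ T)) : SGe S T := by
  obtain ⟨S', hle, hrel⟩ := h
  obtain ⟨a, S'', _, hrel', rfl⟩ := Multiset.rel_cons_right.1 hrel
  exact ⟨S'', le_trans (Multiset.le_cons_self _ _) hle, hrel'⟩

theorem SGe.invCons {b : Fm} {S T : Multiset Fm} (h : SGe S (b ::ₘ T)) :
    ∃ a, a ∈ S ∧ Fm.ge a b ∧ SGe (S.erase a) T := by
  obtain ⟨S', hle, hrel⟩ := h
  obtain ⟨a, S'', hab, hrel', rfl⟩ := Multiset.rel_cons_right.1 hrel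
  have ha : a ∈ S := Multiset.mem_of_le hle (Multiset.mem_cons_self _ _)
  have h2 : S'' ≤ S.erase a := by
    have := Multiset.erase_le_erase a hle
    rwa [Multiset.erase_cons_head] at this
  exact ⟨a, ha, hab, ⟨S'', h2, hrel'⟩⟩

theorem SGe.mem {C : Fm} {S T : Multiset Fm} (h : SGe S T) (hC : C ∈ T) :
    ∃ F, F ∈ S ∧ Fm.ge F C := by
  obtain ⟨T', rfl⟩ := Multiset.exists_cons_of_mem hC
  obtain ⟨a, ha, hge, _⟩ := h.invCons
  exact ⟨a, ha, hge⟩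

theorem SGe.trans {S T U : Multiset Fm} (h1 : SGe S T) (h2 : SGe T U) : SGe S U := by
  obtain ⟨S', hS, r1⟩ := h1
  obtain ⟨T', hT, r2⟩ := h2
  obtain ⟨d, rfl⟩ := Multiset.le_iff_exists_add.1 hT
  obtain ⟨s0, s1, r0, _, rfl⟩ := Multiset.rel_add_right.1 r1
  exact ⟨s0, le_trans (Multiset.le_add_right _ _) hS, Multiset.Rel.trans _ r0 r2⟩

theorem addc (W S : Multiset Fm) (a : Fm) : W + (a ::ₘ S) = a ::ₘ (W + S) := by
  rw [add_comm, Multiset.cons_add, add_comm S W]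

/-! ### The uniform provability-with-restart system -/

/-- Freshness condition for eigenvariables in the `UP` system. -/
def UFresh (d : ℕ) (G₀ P : Fm) (S : Multiset Fm) (C : Fm) : Prop :=
  ¬ Fm.constIn d P ∧ (∀ F ∈ S, ¬ Fm.constIn d F) ∧ ¬ Fm.constIn d C ∧ ¬ Fm.constIn d G₀

/-- Uniform provability with restart goal `G₀`, with height index. -/
inductive UP (G₀ : Fm) : ℕ → Multiset Fm → Fm → Prop
  | ax {n : ℕ} {S : Multiset Fm} {C : Fm} (hC : C.neutral) (h : C ∈ S) : UP G₀ n S C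
  | top {n : ℕ} {S : Multiset Fm} : UP G₀ n S Fm.top
  | restart {n : ℕ} {S : Multiset Fm} {C : Fm} (hC : C.neutral) (p : UP G₀ n S G₀) : UP G₀ (n+1) S C
  | botRed {n : ℕ} {S : Multiset Fm} {C : Fm} (hC : C.neutral) (p : UP G₀ n S Fm.bot) : UP G₀ (n+1) S C
  | contrL {n : ℕ} {A : Fm} {S : Multiset Fm} {C : Fm} (hC : C.neutral) (p : UP G₀ n (A ::ₘ A ::ₘ S) C) :
      UP G₀ (n+1) (A ::ₘ S) C
  | andL {n : ℕ} {X Y : Fm} {S : Multiset Fm} {C : Fm} (hC : C.neutral) (p : UP G₀ n (X ::ₘ Y ::ₘ (X.conj Y) ::ₘ S) C) :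
      UP G₀ (n+1) ((X.conj Y) ::ₘ S) C
  | orL {n : ℕ} {X Y : Fm} {S : Multiset Fm} {C : Fm} (hC : C.neutral) (p : UP G₀ n (X ::ₘ S) C) (q : UP G₀ n (Y ::ₘ S) C) :
      UP G₀ (n+1) ((X.disj Y) ::ₘ S) C
  | impL {n : ℕ} {X Y : Fm} {S : Multiset Fm} {C : Fm} (hC : C.neutral) (p : UP G₀ n ((X.imp Y) ::ₘ S) X)
      (q : UP G₀ n (Y ::ₘ S) C) : UP G₀ (n+1) ((X.imp Y) ::ₘ S) C
  | allL {n : ℕ} {P : Fm} {S : Multiset Fm} {C : Fm} (hC : C.neutral) (t : Tm)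
      (p : UP G₀ n ((P.inst t) ::ₘ (Fm.all P) ::ₘ S) C) : UP G₀ (n+1) ((Fm.all P) ::ₘ S) C
  | exL {n : ℕ} {P : Fm} {S : Multiset Fm} {C : Fm} (hC : C.neutral)
      (p : ∀ d, UFresh d G₀ P S C → UP G₀ n ((P.inst (Tm.const d)) ::ₘ S) C) :
      UP G₀ (n+1) ((Fm.ex P) ::ₘ S) C
  | andR {n : ℕ} {S : Multiset Fm} {A B : Fm} (p : UP G₀ n S A) (q : UP G₀ n S B) : UP G₀ (n+1) S (A.conj B)
  | orR1 {n : ℕ} {S : Multiset Fm} {A B : Fm} (p : UP G₀ n S A) : UP G₀ (n+1) S (A.disj B)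
  | orR2 {n : ℕ} {S : Multiset Fm} {A B : Fm} (p : UP G₀ n S B) : UP G₀ (n+1) S (A.disj B)
  | impR {n : ℕ} {S : Multiset Fm} {A B : Fm} (p : UP G₀ n (A ::ₘ S) B) : UP G₀ (n+1) S (A.imp B)
  | exR {n : ℕ} {S : Multiset Fm} {B : Fm} (t : Tm) (p : UP G₀ n S (B.inst t)) : UP G₀ (n+1) S (Fm.ex B)
  | allR {n : ℕ} {S : Multiset Fm} {B : Fm} (p : ∀ d, UFresh d G₀ B S (Fm.all B) → UP G₀ n S (B.inst (Tm.const d))) :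
      UP G₀ (n+1) S (Fm.all B)

theorem UP.mono {G₀ : Fm} {n : ℕ} {S : Multiset Fm} {C : Fm} (h : UP G₀ n S C) :
    ∀ {m}, n ≤ m → UP G₀ m S C := by
  induction h with
  | ax hC h => exact fun _ => UP.ax hC h
  | top => exact fun _ => UP.top
  | restart hC _ ih =>
      intro m hm
      obtain ⟨m', rfl⟩ : ∃ m', m = m' + 1 := ⟨m - 1, by omega⟩
      exact UP.restart hC (ih (by omega))
  | botRed hC _ ih =>
      intro m hm
      obtain ⟨m', rfl⟩ : ∃ m', m = m' + 1 := ⟨m - 1, by omega⟩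
      exact UP.botRed hC (ih (by omega))
  | contrL hC _ ih =>
      intro m hm
      obtain ⟨m', rfl⟩ : ∃ m', m = m' + 1 := ⟨m - 1, by omega⟩
      exact UP.contrL hC (ih (by omega))
  | andL hC _ ih =>
      intro m hm
      obtain ⟨m', rfl⟩ : ∃ m', m = m' + 1 := ⟨m - 1, by omega⟩
      exact UP.andL hC (ih (by omega))
  | orL hC _ _ ih1 ih2 =>
      intro m hm
      obtain ⟨m', rfl⟩ : ∃ m', m = m' + 1 := ⟨m - 1, by omega⟩
      exact UP.orL hC (ih1 (by omega)) (ih2 (by omega))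
  | impL hC _ _ ih1 ih2 =>
      intro m hm
      obtain ⟨m', rfl⟩ : ∃ m', m = m' + 1 := ⟨m - 1, by omega⟩
      exact UP.impL hC (ih1 (by omega)) (ih2 (by omega))
  | allL hC t _ ih =>
      intro m hm
      obtain ⟨m', rfl⟩ : ∃ m', m = m' + 1 := ⟨m - 1, by omega⟩
      exact UP.allL hC t (ih (by omega))
  | exL hC _ ih =>
      intro m hm
      obtain ⟨m', rfl⟩ : ∃ m', m = m' + 1 := ⟨m - 1, by omega⟩
      exact UP.exL hC (fun d hd => ih d hd (by omega))
  | andR _ _ ih1 ih2 =>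
      intro m hm
      obtain ⟨m', rfl⟩ : ∃ m', m = m' + 1 := ⟨m - 1, by omega⟩
      exact UP.andR (ih1 (by omega)) (ih2 (by omega))
  | orR1 _ ih =>
      intro m hm
      obtain ⟨m', rfl⟩ : ∃ m', m = m' + 1 := ⟨m - 1, by omega⟩
      exact UP.orR1 (ih (by omega))
  | orR2 _ ih =>
      intro m hm
      obtain ⟨m', rfl⟩ : ∃ m', m = m' + 1 := ⟨m - 1, by omega⟩
      exact UP.orR2 (ih (by omega))
  | impR _ ih =>
      intro m hm
      obtain ⟨m', rfl⟩ : ∃ m', m = m' + 1 := ⟨m - 1, by omega⟩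
      exact UP.impR (ih (by omega))
  | exR t _ ih =>
      intro m hm
      obtain ⟨m', rfl⟩ : ∃ m', m = m' + 1 := ⟨m - 1, by omega⟩
      exact UP.exR t (ih (by omega))
  | allR _ ih =>
      intro m hm
      obtain ⟨m', rfl⟩ : ∃ m', m = m' + 1 := ⟨m - 1, by omega⟩
      exact UP.allR (fun d hd => ih d hd (by omega))

end St16

namespace St16

theorem neutral_fmap {f : ℕ → ℕ} {A : Fm} (h : A.neutral) : (fmap f A).neutral := by
  rcases neutral_cases A h with ⟨p, ts, rfl⟩ | rfl
  · exact neutral_atom _ _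
  · exact neutral_bot

theorem mmap_fresh {f : ℕ → ℕ} {e : ℕ} {S : Multiset Fm}
    (hS : ∀ F ∈ S, ¬ Fm.constIn e F) (hf : ∀ x, x ≠ e → f x = x) :
    S.map (fmap f) = S := by
  have : S.map (fmap f) = S.map id := by
    apply Multiset.map_congr rfl
    intro F hF
    show fmap f F = id F
    exact fmap_fresh (hS F hF) hf
  rw [this, Multiset.map_id]

theorem le_addl (S W : Multiset Fm) : S ≤ W + S := by
  rw [add_comm]; exact Multiset.le_iff_exists_add.2 ⟨W, rfl⟩

/-- Renaming of constants in a `UP` derivation (height-preserving). -/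
theorem UP.rename {G₀ : Fm} {n : ℕ} {S : Multiset Fm} {C : Fm} (h : UP G₀ n S C) :
    ∀ (f : ℕ → ℕ), (∀ c, Fm.constIn c G₀ → f c = c) →
    UP G₀ n (S.map (fmap f)) (fmap f C) := by
  induction h with
  | ax hC hm => exact fun f hf => UP.ax (neutral_fmap hC) (Multiset.mem_map_of_mem _ hm)
  | top => exact fun f hf => UP.top
  | restart hC _ ih =>
      intro f hf
      refine UP.restart (neutral_fmap hC) ?_
      have := ih f hf
      rwa [fmap_fix hf] at this
  | botRed hC _ ih => exact fun f hf => UP.botRed (neutral_fmap hC) (ih f hf)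
  | contrL hC _ ih =>
      intro f hf
      rw [Multiset.map_cons]
      apply UP.contrL (neutral_fmap hC)
      have := ih f hf
      rwa [Multiset.map_cons, Multiset.map_cons] at this
  | andL hC _ ih =>
      intro f hf
      rw [Multiset.map_cons]
      apply UP.andL (neutral_fmap hC)
      have := ih f hf
      rwa [Multiset.map_cons, Multiset.map_cons, Multiset.map_cons] at this
  | orL hC _ _ ih1 ih2 =>
      intro f hf
      rw [Multiset.map_cons]
      apply UP.orL (neutral_fmap hC)
      · have := ih1 f hf; rwa [Multiset.map_cons] at this
      · have := ih2 f hf; rwa [Multiset.map_cons] at this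
  | impL hC _ _ ih1 ih2 =>
      intro f hf
      rw [Multiset.map_cons]
      apply UP.impL (neutral_fmap hC)
      · have := ih1 f hf; rwa [Multiset.map_cons] at this
      · have := ih2 f hf; rwa [Multiset.map_cons] at this
  | allL hC t _ ih =>
      intro f hf
      rw [Multiset.map_cons]
      apply UP.allL (neutral_fmap hC) (tmap f t)
      have := ih f hf
      rwa [Multiset.map_cons, Multiset.map_cons, fmap_inst] at this
  | @exL n P S C hC _ ih =>
      intro f hf
      rw [Multiset.map_cons]
      apply UP.exL (neutral_fmap hC)
      intro d hd
      set T : Multiset Fm := P ::ₘ C ::ₘ G₀ ::ₘ S with hT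
      set e : ℕ := msB T with he
      have hfr : ∀ F ∈ T, ¬ Fm.constIn e F := msB_fresh (le_refl _)
      have heP : ¬ Fm.constIn e P := hfr P (by simp [hT])
      have heC : ¬ Fm.constIn e C := hfr C (by simp [hT])
      have heG : ¬ Fm.constIn e G₀ := hfr G₀ (by simp [hT])
      have heS : ∀ F ∈ S, ¬ Fm.constIn e F := fun F hF => hfr F (by simp [hT, hF])
      set f' : ℕ → ℕ := fun x => if x = e then d else f x with hf'
      have hf'G : ∀ c, Fm.constIn c G₀ → f' c = c := by
        intro c hc
        have : c ≠ e := fun h => heG (h ▸ hc)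
        simp only [hf', if_neg this]
        exact hf c hc
      have := ih e ⟨heP, heS, heC, heG⟩ f' hf'G
      rw [Multiset.map_cons, fmap_inst] at this
      have h1 : tmap f' (Tm.const e) = Tm.const d := by simp [tmap, hf']
      have h2 : fmap f' P = fmap f P := fmap_congr (by
        intro c hc
        have : c ≠ e := fun h => heP (h ▸ hc)
        simp [hf', this])
      have h3 : fmap f' C = fmap f C := fmap_congr (by
        intro c hc
        have : c ≠ e := fun h => heC (h ▸ hc)
        simp [hf', this])
      have h4 : S.map (fmap f') = S.map (fmap f) := by
        apply Multiset.map_congr rfl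
        intro F hF
        exact fmap_congr (by
          intro c hc
          have : c ≠ e := fun h => heS F hF (h ▸ hc)
          simp [hf', this])
      rwa [h1, h2, h3, h4] at this
  | andR _ _ ih1 ih2 => exact fun f hf => UP.andR (ih1 f hf) (ih2 f hf)
  | orR1 _ ih => exact fun f hf => UP.orR1 (ih f hf)
  | orR2 _ ih => exact fun f hf => UP.orR2 (ih f hf)
  | impR _ ih =>
      intro f hf
      apply UP.impR
      have := ih f hf
      rwa [Multiset.map_cons] at this
  | exR t _ ih =>
      intro f hf
      apply UP.exR (tmap f t)
      have := ih f hf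
      rwa [fmap_inst] at this
  | @allR n S B _ ih =>
      intro f hf
      apply UP.allR
      intro d hd
      set T : Multiset Fm := B ::ₘ (Fm.all B) ::ₘ G₀ ::ₘ S with hT
      set e : ℕ := msB T with he
      have hfr : ∀ F ∈ T, ¬ Fm.constIn e F := msB_fresh (le_refl _)
      have heB : ¬ Fm.constIn e B := hfr B (by simp [hT])
      have heA : ¬ Fm.constIn e (Fm.all B) := hfr (Fm.all B) (by simp [hT])
      have heG : ¬ Fm.constIn e G₀ := hfr G₀ (by simp [hT])
      have heS : ∀ F ∈ S, ¬ Fm.constIn e F := fun F hF => hfr F (by simp [hT, hF])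
      set f' : ℕ → ℕ := fun x => if x = e then d else f x with hf'
      have hf'G : ∀ c, Fm.constIn c G₀ → f' c = c := by
        intro c hc
        have : c ≠ e := fun h => heG (h ▸ hc)
        simp only [hf', if_neg this]
        exact hf c hc
      have := ih e ⟨heB, heS, heA, heG⟩ f' hf'G
      rw [fmap_inst] at this
      have h1 : tmap f' (Tm.const e) = Tm.const d := by simp [tmap, hf']
      have h2 : fmap f' B = fmap f B := fmap_congr (by
        intro c hc
        have : c ≠ e := fun h => heB (h ▸ hc)
        simp [hf', this])
      have h4 : S.map (fmap f') = S.map (fmap f) := by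
        apply Multiset.map_congr rfl
        intro F hF
        exact fmap_congr (by
          intro c hc
          have : c ≠ e := fun h => heS F hF (h ▸ hc)
          simp [hf', this])
      rwa [h1, h2, h4] at this

/-- Rename a single fresh eigenvariable (left instance). -/
theorem UP.renameFresh {G₀ : Fm} {m : ℕ} {S : Multiset Fm} {C P : Fm} {e : ℕ}
    (h : UP G₀ m ((P.inst (Tm.const e)) ::ₘ S) C)
    (heP : ¬ Fm.constIn e P) (heS : ∀ F ∈ S, ¬ Fm.constIn e F)
    (heC : ¬ Fm.constIn e C) (heG : ¬ Fm.constIn e G₀) (d : ℕ) :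
    UP G₀ m ((P.inst (Tm.const d)) ::ₘ S) C := by
  set f : ℕ → ℕ := fun x => if x = e then d else x with hf
  have hfix : ∀ x, x ≠ e → f x = x := by intro x hx; simp [hf, hx]
  have hG : ∀ c, Fm.constIn c G₀ → f c = c := fun c hc =>
    hfix c (fun h => heG (h ▸ hc))
  have := h.rename f hG
  rw [Multiset.map_cons, fmap_inst, mmap_fresh heS hfix, fmap_fresh heC hfix,
    fmap_fresh heP hfix] at this
  have h1 : tmap f (Tm.const e) = Tm.const d := by simp [tmap, hf]
  rwa [h1] at this

/-- Rename a single fresh eigenvariable (right instance). -/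
theorem UP.renameFreshR {G₀ : Fm} {m : ℕ} {S : Multiset Fm} {B : Fm} {e : ℕ}
    (h : UP G₀ m S (B.inst (Tm.const e)))
    (heB : ¬ Fm.constIn e B) (heS : ∀ F ∈ S, ¬ Fm.constIn e F)
    (heG : ¬ Fm.constIn e G₀) (d : ℕ) :
    UP G₀ m S (B.inst (Tm.const d)) := by
  set f : ℕ → ℕ := fun x => if x = e then d else x with hf
  have hfix : ∀ x, x ≠ e → f x = x := by intro x hx; simp [hf, hx]
  have hG : ∀ c, Fm.constIn c G₀ → f c = c := fun c hc =>
    hfix c (fun h => heG (h ▸ hc))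
  have := h.rename f hG
  rw [fmap_inst, mmap_fresh heS hfix, fmap_fresh heB hfix] at this
  have h1 : tmap f (Tm.const e) = Tm.const d := by simp [tmap, hf]
  rwa [h1] at this

end St16

namespace St16

/-- Helper: pick a constant fresh for a multiset of formulas. -/
theorem fresh_choice (T : Multiset Fm) : ∃ e, ∀ F ∈ T, ¬ Fm.constIn e F :=
  ⟨msB T, msB_fresh (le_refl _)⟩

/-- The ⪰-weakening theorem: a derivation under assumptions `S` can be
transformed into one under any ⪰-stronger multiset `S'`. -/
theorem UP.gw {G₀ : Fm} : ∀ n (S : Multiset Fm) (C : Fm), UP G₀ n S C →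
    ∀ (S' : Multiset Fm), SGe S' S → ∃ m, UP G₀ m S' C := by
  intro n
  induction n using Nat.strong_induction_on with
  | _ n IH =>
  intro S C h S' hge
  cases h with
  | ax hC hm =>
      obtain ⟨F, hF, hgeF⟩ := hge.mem hm
      rw [ge_neutral hC hgeF] at hF
      exact ⟨0, UP.ax hC hF⟩
  | top => exact ⟨0, UP.top⟩
  | @restart n' _ _ hC p =>
      obtain ⟨m, hm⟩ := IH n' (by omega) _ _ p _ hge
      exact ⟨m + 1, UP.restart hC hm⟩
  | @botRed n' _ _ hC p =>
      obtain ⟨m, hm⟩ := IH n' (by omega) _ _ p _ hge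
      exact ⟨m + 1, UP.botRed hC hm⟩
  | @contrL n' A S₀ _ hC p =>
      obtain ⟨F, hF, hgeF, hrest⟩ := hge.invCons
      obtain ⟨m, hm⟩ := IH n' (by omega) _ _ p (F ::ₘ S') (SGe.consCons hgeF hge)
      refine ⟨m + 1, ?_⟩
      rw [← Multiset.cons_erase hF]
      apply UP.contrL hC
      rw [← Multiset.cons_erase hF] at hm
      exact hm
  | @andL n' X Y S₀ _ hC p =>
      obtain ⟨F, hF, hgeF, hrest⟩ := hge.invCons
      have hFe := ge_conj hgeF
      subst hFe
      obtain ⟨m, hm⟩ := IH n' (by omega) _ _ p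
        (X ::ₘ Y ::ₘ (X.conj Y) ::ₘ (S'.erase (X.conj Y)))
        (SGe.consCons (Fm.ge.refl X) (SGe.consCons (Fm.ge.refl Y)
          (SGe.consCons (Fm.ge.refl _) hrest)))
      refine ⟨m + 1, ?_⟩
      rw [← Multiset.cons_erase hF]
      exact UP.andL hC hm
  | @orL n' X Y S₀ _ hC p q =>
      obtain ⟨F, hF, hgeF, hrest⟩ := hge.invCons
      rcases ge_disj hgeF with hFe | hgeX | hgeY
      · subst hFe
        obtain ⟨m1, h1⟩ := IH n' (by omega) _ _ p (X ::ₘ (S'.erase (X.disj Y)))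
          (SGe.consCons (Fm.ge.refl X) hrest)
        obtain ⟨m2, h2⟩ := IH n' (by omega) _ _ q (Y ::ₘ (S'.erase (X.disj Y)))
          (SGe.consCons (Fm.ge.refl Y) hrest)
        refine ⟨max m1 m2 + 1, ?_⟩
        rw [← Multiset.cons_erase hF]
        exact UP.orL hC (h1.mono (le_max_left _ _)) (h2.mono (le_max_right _ _))
      · refine IH n' (by omega) _ _ p S' ?_
        rw [← Multiset.cons_erase hF]
        exact SGe.consCons hgeX hrest
      · refine IH n' (by omega) _ _ q S' ?_
        rw [← Multiset.cons_erase hF]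
        exact SGe.consCons hgeY hrest
  | @impL n' X Y S₀ _ hC p q =>
      obtain ⟨F, hF, hgeF, hrest⟩ := hge.invCons
      rcases ge_imp hgeF with hFe | hgeY
      · subst hFe
        obtain ⟨m1, h1⟩ := IH n' (by omega) _ _ p S' hge
        obtain ⟨m2, h2⟩ := IH n' (by omega) _ _ q (Y ::ₘ (S'.erase (X.imp Y)))
          (SGe.consCons (Fm.ge.refl Y) hrest)
        refine ⟨max m1 m2 + 1, ?_⟩
        rw [← Multiset.cons_erase hF]
        apply UP.impL hC
        · rw [Multiset.cons_erase hF]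
          exact h1.mono (le_max_left _ _)
        · exact h2.mono (le_max_right _ _)
      · refine IH n' (by omega) _ _ q S' ?_
        rw [← Multiset.cons_erase hF]
        exact SGe.consCons hgeY hrest
  | @allL n' P S₀ _ hC t p =>
      obtain ⟨F, hF, hgeF, hrest⟩ := hge.invCons
      have hFe := ge_all hgeF
      subst hFe
      obtain ⟨m, hm⟩ := IH n' (by omega) _ _ p
        ((P.inst t) ::ₘ (Fm.all P) ::ₘ (S'.erase (Fm.all P)))
        (SGe.consCons (Fm.ge.refl _) (SGe.consCons (Fm.ge.refl _) hrest))
      refine ⟨m + 1, ?_⟩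
      rw [← Multiset.cons_erase hF]
      exact UP.allL hC t hm
  | @exL n' P S₀ _ hC p =>
      obtain ⟨F, hF, hgeF, hrest⟩ := hge.invCons
      rcases ge_ex hgeF with hFe | ⟨d₀, hged⟩
      · subst hFe
        set T : Multiset Fm := P ::ₘ C ::ₘ G₀ ::ₘ (S₀ + S'.erase (Fm.ex P)) with hT
        set e : ℕ := msB T with he
        have hfr : ∀ F ∈ T, ¬ Fm.constIn e F := msB_fresh (le_refl _)
        have heP : ¬ Fm.constIn e P := hfr P (by simp [hT])
        have heC : ¬ Fm.constIn e C := hfr C (by simp [hT])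
        have heG : ¬ Fm.constIn e G₀ := hfr G₀ (by simp [hT])
        have heS0 : ∀ F ∈ S₀, ¬ Fm.constIn e F := fun F hFm =>
          hfr F (by simp [hT, Multiset.mem_add, hFm])
        have heS' : ∀ F ∈ S'.erase (Fm.ex P), ¬ Fm.constIn e F := fun F hFm =>
          hfr F (by simp [hT, Multiset.mem_add, hFm])
        have hprem := p e ⟨heP, heS0, heC, heG⟩
        obtain ⟨m, hm⟩ := IH n' (by omega) _ _ hprem
          ((P.inst (Tm.const e)) ::ₘ (S'.erase (Fm.ex P)))
          (SGe.consCons (Fm.ge.refl _) hrest)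
        refine ⟨m + 1, ?_⟩
        rw [← Multiset.cons_erase hF]
        apply UP.exL hC
        intro d hd
        exact hm.renameFresh heP heS' heC heG d
      · set T : Multiset Fm := P ::ₘ C ::ₘ G₀ ::ₘ S₀ with hT
        set e : ℕ := msB T with he
        have hfr : ∀ F ∈ T, ¬ Fm.constIn e F := msB_fresh (le_refl _)
        have heP : ¬ Fm.constIn e P := hfr P (by simp [hT])
        have heC : ¬ Fm.constIn e C := hfr C (by simp [hT])
        have heG : ¬ Fm.constIn e G₀ := hfr G₀ (by simp [hT])
        have heS0 : ∀ F ∈ S₀, ¬ Fm.constIn e F := fun F hFm => hfr F (by simp [hT, hFm])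
        have hprem := (p e ⟨heP, heS0, heC, heG⟩).renameFresh heP heS0 heC heG d₀
        refine IH n' (by omega) _ _ hprem S' ?_
        rw [← Multiset.cons_erase hF]
        exact SGe.consCons hged hrest
  | @andR n' _ A B p q =>
      obtain ⟨m1, h1⟩ := IH n' (by omega) _ _ p S' hge
      obtain ⟨m2, h2⟩ := IH n' (by omega) _ _ q S' hge
      exact ⟨max m1 m2 + 1, UP.andR (h1.mono (le_max_left _ _)) (h2.mono (le_max_right _ _))⟩
  | @orR1 n' _ A B p =>
      obtain ⟨m, hm⟩ := IH n' (by omega) _ _ p S' hge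
      exact ⟨m + 1, UP.orR1 hm⟩
  | @orR2 n' _ A B p =>
      obtain ⟨m, hm⟩ := IH n' (by omega) _ _ p S' hge
      exact ⟨m + 1, UP.orR2 hm⟩
  | @impR n' _ A B p =>
      obtain ⟨m, hm⟩ := IH n' (by omega) _ _ p (A ::ₘ S') (SGe.consCons (Fm.ge.refl A) hge)
      exact ⟨m + 1, UP.impR hm⟩
  | @exR n' _ B t p =>
      obtain ⟨m, hm⟩ := IH n' (by omega) _ _ p S' hge
      exact ⟨m + 1, UP.exR t hm⟩
  | @allR n' _ B p =>
      set T : Multiset Fm := B ::ₘ (Fm.all B) ::ₘ G₀ ::ₘ (S + S') with hT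
      set e : ℕ := msB T with he
      have hfr : ∀ F ∈ T, ¬ Fm.constIn e F := msB_fresh (le_refl _)
      have heB : ¬ Fm.constIn e B := hfr B (by simp [hT])
      have heA : ¬ Fm.constIn e (Fm.all B) := hfr (Fm.all B) (by simp [hT])
      have heG : ¬ Fm.constIn e G₀ := hfr G₀ (by simp [hT])
      have heS0 : ∀ F ∈ S, ¬ Fm.constIn e F := fun F hFm =>
        hfr F (by simp [hT, Multiset.mem_add, hFm])
      have heS' : ∀ F ∈ S', ¬ Fm.constIn e F := fun F hFm =>
        hfr F (by simp [hT, Multiset.mem_add, hFm])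
      obtain ⟨m, hm⟩ := IH n' (by omega) _ _ (p e ⟨heB, heS0, heA, heG⟩) S' hge
      refine ⟨m + 1, UP.allR ?_⟩
      intro d hd
      exact hm.renameFreshR heB heS' heG d

/-- Provability (no height). -/
def UPP (G₀ : Fm) (S : Multiset Fm) (C : Fm) : Prop := ∃ n, UP G₀ n S C

theorem UPP.gw {G₀ : Fm} {S S' : Multiset Fm} {C : Fm} (h : UPP G₀ S C)
    (hge : SGe S' S) : UPP G₀ S' C := by
  obtain ⟨n, hn⟩ := h
  exact UP.gw n _ _ hn S' hge

theorem UPP.weaken {G₀ : Fm} {S S' : Multiset Fm} {C : Fm} (h : UPP G₀ S C)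
    (hle : S ≤ S') : UPP G₀ S' C := h.gw (SGe.ofLe hle)

/-- Blind decomposition of the goal, reducing everything to neutral goals. -/
theorem dive {G₀ : Fm} (base : Multiset Fm)
    (H : ∀ (W : Multiset Fm) (C : Fm), C.neutral → UPP G₀ (W + base) C) :
    ∀ (k : ℕ) (C : Fm), fsz C ≤ k → ∀ (W : Multiset Fm), UPP G₀ (W + base) C := by
  intro k
  induction k with
  | zero => intro C hC; exact absurd (lt_of_lt_of_le (fsz_pos C) hC) (by omega)
  | succ k ih =>
      intro C hC W
      cases C with
      | top => exact ⟨0, UP.top⟩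
      | bot => exact H W _ neutral_bot
      | atom p ts => exact H W _ (neutral_atom p ts)
      | conj A B =>
          obtain ⟨n1, h1⟩ := ih A (by simp [fsz] at hC ⊢; omega) W
          obtain ⟨n2, h2⟩ := ih B (by simp [fsz] at hC ⊢; omega) W
          exact ⟨max n1 n2 + 1, UP.andR (h1.mono (le_max_left _ _)) (h2.mono (le_max_right _ _))⟩
      | disj A B =>
          obtain ⟨n1, h1⟩ := ih A (by simp [fsz] at hC ⊢; omega) W
          exact ⟨n1 + 1, UP.orR1 h1⟩
      | imp A B =>
          obtain ⟨n1, h1⟩ := ih B (by simp [fsz] at hC ⊢; omega) (A ::ₘ W)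
          rw [Multiset.cons_add] at h1
          exact ⟨n1 + 1, UP.impR h1⟩
      | ex B =>
          obtain ⟨n1, h1⟩ := ih (B.inst (Tm.const 0))
            (by rw [fsz_inst]; simp [fsz] at hC ⊢; omega) W
          exact ⟨n1 + 1, UP.exR (Tm.const 0) h1⟩
      | all B =>
          set T : Multiset Fm := B ::ₘ G₀ ::ₘ (W + base) with hT
          set e : ℕ := msB T with he
          have hfr : ∀ F ∈ T, ¬ Fm.constIn e F := msB_fresh (le_refl _)
          have heB : ¬ Fm.constIn e B := hfr B (by simp [hT])
          have heG : ¬ Fm.constIn e G₀ := hfr G₀ (by simp [hT])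
          have heS : ∀ F ∈ W + base, ¬ Fm.constIn e F := fun F hFm =>
            hfr F (by simp [hT, hFm])
          obtain ⟨n1, h1⟩ := ih (B.inst (Tm.const e))
            (by rw [fsz_inst]; simp [fsz] at hC ⊢; omega) W
          refine ⟨n1 + 1, UP.allR ?_⟩
          intro d hd
          exact h1.renameFreshR heB heS heG d

theorem diveAll {G₀ : Fm} {base : Multiset Fm}
    (H : ∀ (W : Multiset Fm) (C : Fm), C.neutral → UPP G₀ (W + base) C) (C : Fm) :
    UPP G₀ base C := by
  have := dive base H (fsz C) C (le_refl _) 0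
  rwa [zero_add] at this

/-- From a proof of the restart goal, any goal is provable. -/
theorem restartFull {G₀ : Fm} {S : Multiset Fm} (h : UPP G₀ S G₀) (C : Fm) :
    UPP G₀ S C := by
  apply diveAll (fun W C' hC' => ?_) C
  obtain ⟨m, hm⟩ := h.weaken (le_addl S W)
  exact ⟨m + 1, UP.restart hC' hm⟩

/-- From a proof of ⊥, any goal is provable. -/
theorem botFull {G₀ : Fm} {S : Multiset Fm} (h : UPP G₀ S Fm.bot) (C : Fm) :
    UPP G₀ S C := by
  apply diveAll (fun W C' hC' => ?_) C
  obtain ⟨m, hm⟩ := h.weaken (le_addl S W)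
  exact ⟨m + 1, UP.botRed hC' hm⟩

/-- Admissible contraction (into a member of the context) for the restart goal. -/
theorem contrAdm {G₀ F : Fm} {S : Multiset Fm} (hF : F ∈ S)
    (h : UPP G₀ (F ::ₘ S) G₀) : UPP G₀ S G₀ := by
  obtain ⟨S₂, rfl⟩ := Multiset.exists_cons_of_mem hF
  apply diveAll (fun W C' hC' => ?_) G₀
  rw [addc]
  have hle : F ::ₘ F ::ₘ S₂ ≤ F ::ₘ F ::ₘ (W + S₂) :=
    Multiset.cons_le_cons _ (Multiset.cons_le_cons _ (le_addl _ W))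
  obtain ⟨m, hm⟩ := h.weaken hle
  exact ⟨m + 2, UP.contrL hC' (UP.restart hC' hm)⟩

/-- Admissible backchaining on an implication in the context. -/
theorem fireClause {G₀ X Y : Fm} {S : Multiset Fm} (hXY : X.imp Y ∈ S)
    (h1 : UPP G₀ S X) (h2 : UPP G₀ (Y ::ₘ S) G₀) : UPP G₀ S G₀ := by
  obtain ⟨S₂, rfl⟩ := Multiset.exists_cons_of_mem hXY
  apply diveAll (fun W C' hC' => ?_) G₀
  rw [addc]
  have hle1 : (X.imp Y) ::ₘ S₂ ≤ (X.imp Y) ::ₘ (X.imp Y) ::ₘ (W + S₂) :=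
    Multiset.cons_le_cons _ (le_trans (le_addl _ W) (Multiset.le_cons_self _ _))
  obtain ⟨m1, hm1⟩ := h1.weaken hle1
  have hle2 : Y ::ₘ (X.imp Y) ::ₘ S₂ ≤ Y ::ₘ (X.imp Y) ::ₘ (W + S₂) :=
    Multiset.cons_le_cons _ (Multiset.cons_le_cons _ (le_addl _ W))
  obtain ⟨m2, hm2⟩ := h2.weaken hle2
  refine ⟨max m1 (m2 + 1) + 2, UP.contrL hC' ?_⟩
  exact UP.impL hC' (hm1.mono (le_max_left _ _))
    ((UP.restart hC' hm2).mono (le_max_right _ _))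

end St16

namespace St16

theorem isAtom_fmap {f : ℕ → ℕ} {A : Fm} (h : A.isAtom) : (fmap f A).isAtom := by
  cases A <;> simp_all [Fm.isAtom, fmap]

/-! ### Inversion and substitution lemmas for G- and D-formulas -/

theorem GFm_conj {a b : Fm} (h : GFm (a.conj b)) : GFm a ∧ GFm b := by
  cases h with | conj h1 h2 => exact ⟨h1, h2⟩

theorem GFm_disj {a b : Fm} (h : GFm (a.disj b)) : GFm a ∧ GFm b := by
  cases h with | disj h1 h2 => exact ⟨h1, h2⟩

theorem GFm_imp {a b : Fm} (h : GFm (a.imp b)) : DFm a ∧ GFm b := by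
  cases h with | imp h1 h2 => exact ⟨h1, h2⟩

theorem GFm_ex {a : Fm} (h : GFm (Fm.ex a)) : GFm a := by
  cases h with | ex h1 => exact h1

theorem GFm_all {a : Fm} (h : GFm (Fm.all a)) : False := by cases h

theorem DFm_conj {a b : Fm} (h : DFm (a.conj b)) : DFm a ∧ DFm b := by
  cases h with | conj h1 h2 => exact ⟨h1, h2⟩

theorem DFm_disj {a b : Fm} (h : DFm (a.disj b)) : DFm a ∧ DFm b := by
  cases h with | disj h1 h2 => exact ⟨h1, h2⟩

theorem DFm_imp {a b : Fm} (h : DFm (a.imp b)) : GFm a ∧ DFm b := by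
  cases h with | imp h1 h2 => exact ⟨h1, h2⟩

theorem DFm_ex {a : Fm} (h : DFm (Fm.ex a)) : DFm a := by
  cases h with | ex h1 => exact h1

theorem DFm_all {a : Fm} (h : DFm (Fm.all a)) : DFm a := by
  cases h with | all h1 => exact h1

theorem gd_subst : ∀ (A : Fm) (k : ℕ) (u : Tm),
    (GFm A → GFm (Fm.subst k u A)) ∧ (DFm A → DFm (Fm.subst k u A)) := by
  intro A
  induction A with
  | top => exact fun k u => ⟨fun _ => GFm.top, fun _ => DFm.top⟩
  | bot => exact fun k u => ⟨fun _ => GFm.bot, fun _ => DFm.bot⟩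
  | atom p ts => exact fun k u => ⟨fun _ => GFm.atom, fun _ => DFm.atom⟩
  | conj a b iha ihb =>
      intro k u
      exact ⟨fun h => GFm.conj ((iha k u).1 (GFm_conj h).1) ((ihb k u).1 (GFm_conj h).2),
        fun h => DFm.conj ((iha k u).2 (DFm_conj h).1) ((ihb k u).2 (DFm_conj h).2)⟩
  | disj a b iha ihb =>
      intro k u
      exact ⟨fun h => GFm.disj ((iha k u).1 (GFm_disj h).1) ((ihb k u).1 (GFm_disj h).2),
        fun h => DFm.disj ((iha k u).2 (DFm_disj h).1) ((ihb k u).2 (DFm_disj h).2)⟩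
  | imp a b iha ihb =>
      intro k u
      exact ⟨fun h => GFm.imp ((iha k u).2 (GFm_imp h).1) ((ihb k u).1 (GFm_imp h).2),
        fun h => DFm.imp ((iha k u).1 (DFm_imp h).1) ((ihb k u).2 (DFm_imp h).2)⟩
  | ex a iha =>
      intro k u
      exact ⟨fun h => GFm.ex ((iha (k+1) u).1 (GFm_ex h)),
        fun h => DFm.ex ((iha (k+1) u).2 (DFm_ex h))⟩
  | all a iha =>
      intro k u
      exact ⟨fun h => absurd h GFm_all,
        fun h => DFm.all ((iha (k+1) u).2 (DFm_all h))⟩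

theorem GFm_inst {A : Fm} (h : GFm A) (u : Tm) : GFm (Fm.inst u A) :=
  (gd_subst A 0 u).1 h

theorem DFm_inst {A : Fm} (h : DFm A) (u : Tm) : DFm (Fm.inst u A) :=
  (gd_subst A 0 u).2 h

/-! ### Further admissible rules for `UP` -/

theorem UPP.andR' {G₀ : Fm} {S : Multiset Fm} {A B : Fm} (h1 : UPP G₀ S A)
    (h2 : UPP G₀ S B) : UPP G₀ S (A.conj B) := by
  obtain ⟨m1, hm1⟩ := h1; obtain ⟨m2, hm2⟩ := h2
  exact ⟨max m1 m2 + 1, UP.andR (hm1.mono (le_max_left _ _)) (hm2.mono (le_max_right _ _))⟩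

theorem UPP.orR1' {G₀ : Fm} {S : Multiset Fm} {A B : Fm} (h1 : UPP G₀ S A) :
    UPP G₀ S (A.disj B) := by
  obtain ⟨m1, hm1⟩ := h1; exact ⟨m1 + 1, UP.orR1 hm1⟩

theorem UPP.orR2' {G₀ : Fm} {S : Multiset Fm} {A B : Fm} (h1 : UPP G₀ S B) :
    UPP G₀ S (A.disj B) := by
  obtain ⟨m1, hm1⟩ := h1; exact ⟨m1 + 1, UP.orR2 hm1⟩

theorem UPP.impR' {G₀ : Fm} {S : Multiset Fm} {A B : Fm} (h1 : UPP G₀ (A ::ₘ S) B) :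
    UPP G₀ S (A.imp B) := by
  obtain ⟨m1, hm1⟩ := h1; exact ⟨m1 + 1, UP.impR hm1⟩

theorem UPP.exR' {G₀ : Fm} {S : Multiset Fm} {B : Fm} (t : Tm) (h1 : UPP G₀ S (B.inst t)) :
    UPP G₀ S (Fm.ex B) := by
  obtain ⟨m1, hm1⟩ := h1; exact ⟨m1 + 1, UP.exR t hm1⟩

/-- Absorbing an `∧`-decomposition back into a context member. -/
theorem andAbsorb {G₀ X Y : Fm} {S : Multiset Fm} (hXY : X.conj Y ∈ S)
    (h : UPP G₀ (X ::ₘ Y ::ₘ S) G₀) : UPP G₀ S G₀ := by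
  obtain ⟨S₂, rfl⟩ := Multiset.exists_cons_of_mem hXY
  apply diveAll (fun W C' hC' => ?_) G₀
  rw [addc]
  have hle : X ::ₘ Y ::ₘ (X.conj Y) ::ₘ S₂ ≤ X ::ₘ Y ::ₘ (X.conj Y) ::ₘ (W + S₂) :=
    Multiset.cons_le_cons _ (Multiset.cons_le_cons _ (Multiset.cons_le_cons _ (le_addl _ W)))
  obtain ⟨m, hm⟩ := h.weaken hle
  exact ⟨m + 2, UP.andL hC' (UP.restart hC' hm)⟩

/-- Absorbing a `∀`-instantiation back into a context member. -/
theorem allAbsorb {G₀ P : Fm} {t : Tm} {S : Multiset Fm} (hP : Fm.all P ∈ S)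
    (h : UPP G₀ ((P.inst t) ::ₘ S) G₀) : UPP G₀ S G₀ := by
  obtain ⟨S₂, rfl⟩ := Multiset.exists_cons_of_mem hP
  apply diveAll (fun W C' hC' => ?_) G₀
  rw [addc]
  have hle : (P.inst t) ::ₘ (Fm.all P) ::ₘ S₂ ≤ (P.inst t) ::ₘ (Fm.all P) ::ₘ (W + S₂) :=
    Multiset.cons_le_cons _ (Multiset.cons_le_cons _ (le_addl _ W))
  obtain ⟨m, hm⟩ := h.weaken hle
  exact ⟨m + 2, UP.allL hC' t (UP.restart hC' hm)⟩

/-- Admissible case split on a disjunction in the context. -/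
theorem orAdm {G₀ X Y : Fm} {S₂ : Multiset Fm} (h1 : UPP G₀ (X ::ₘ S₂) G₀)
    (h2 : UPP G₀ (Y ::ₘ S₂) G₀) : UPP G₀ ((X.disj Y) ::ₘ S₂) G₀ := by
  apply diveAll (fun W C' hC' => ?_) G₀
  rw [addc]
  obtain ⟨m1, hm1⟩ := h1.weaken (Multiset.cons_le_cons _ (le_addl _ W))
  obtain ⟨m2, hm2⟩ := h2.weaken (Multiset.cons_le_cons _ (le_addl _ W))
  refine ⟨max m1 m2 + 2, UP.orL hC' ?_ ?_⟩
  · exact UP.restart hC' (hm1.mono (by omega))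
  · exact UP.restart hC' (hm2.mono (by omega))

/-- Admissible existential instantiation in the context. -/
theorem exAdm {G₀ P : Fm} {S₂ : Multiset Fm} {e : ℕ}
    (heP : ¬ Fm.constIn e P) (heS : ∀ F ∈ S₂, ¬ Fm.constIn e F) (heG : ¬ Fm.constIn e G₀)
    (h : UPP G₀ ((P.inst (Tm.const e)) ::ₘ (Fm.ex P) ::ₘ S₂) G₀) :
    UPP G₀ ((Fm.ex P) ::ₘ S₂) G₀ := by
  apply diveAll (fun W C' hC' => ?_) G₀
  rw [addc]
  -- pick a constant fresh for everything in sight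
  set T : Multiset Fm := P ::ₘ C' ::ₘ G₀ ::ₘ ((Fm.ex P) ::ₘ (W + S₂)) with hT
  set e₂ : ℕ := msB T with he₂
  have hfr : ∀ F ∈ T, ¬ Fm.constIn e₂ F := msB_fresh (le_refl _)
  have h2P : ¬ Fm.constIn e₂ P := hfr P (by simp [hT])
  have h2C : ¬ Fm.constIn e₂ C' := hfr C' (by simp [hT])
  have h2G : ¬ Fm.constIn e₂ G₀ := hfr G₀ (by simp [hT])
  have h2S : ∀ F ∈ (Fm.ex P) ::ₘ (W + S₂), ¬ Fm.constIn e₂ F := fun F hF =>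
    hfr F (by simp only [hT]; exact Multiset.mem_cons_of_mem (Multiset.mem_cons_of_mem
      (Multiset.mem_cons_of_mem hF)))
  -- move the given instance to e₂ and weaken it into the current context
  obtain ⟨m, hm⟩ := h
  have heS' : ∀ F ∈ (Fm.ex P) ::ₘ S₂, ¬ Fm.constIn e F := by
    intro F hF
    rcases Multiset.mem_cons.1 hF with rfl | hF
    · exact heP
    · exact heS F hF
  have hm2 := hm.renameFresh heP heS' heG heG e₂
  have hup : UPP G₀ ((P.inst (Tm.const e₂)) ::ₘ (Fm.ex P) ::ₘ S₂) G₀ := ⟨m, hm2⟩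
  obtain ⟨m3, hm3⟩ := hup.weaken
    (Multiset.cons_le_cons _ (Multiset.cons_le_cons _ (le_addl _ W)))
  refine ⟨m3 + 3, UP.contrL hC' (UP.exL hC' ?_)⟩
  intro d hd
  exact UP.restart hC' (hm3.renameFresh h2P h2S h2G h2G d)
end St16

namespace St16

/-- The central lemma: a classical proof of `Γc → Δ` (with `Γc` D-formulas and
`Δ` G-formulas), renamed along `f`, yields a restart proof of `G₀` from any
⪰-stronger context, given that each succedent formula entails `G₀`. -/
theorem KL {G₀ : Fm} {Γc Δc : Multiset Fm} (p : CProof Γc Δc) :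
    ∀ (f : ℕ → ℕ), (∀ X ∈ Γc, DFm X) → (∀ B ∈ Δc, GFm B) →
    ∀ Sc : Multiset Fm, SGe Sc (Γc.map (fmap f)) →
    (∀ B ∈ Δc, ∀ S', SGe S' Sc → UPP G₀ S' (fmap f B) → UPP G₀ S' G₀) →
    UPP G₀ Sc G₀ := by
  induction p with
  | @ax Γ Δ h =>
      intro f hΓ hΔ Sc hge hyp
      rcases h with hTop | ⟨A, hA, hAΓ, hAΔ⟩
      · exact hyp _ hTop Sc (SGe.refl _) ⟨0, UP.top⟩
      · have hneu : (fmap f A).neutral := by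
          rcases hA with rfl | h
          · exact neutral_bot
          · exact Or.inl (isAtom_fmap h)
        obtain ⟨F, hF, hgeF⟩ := hge.mem (Multiset.mem_map_of_mem (fmap f) hAΓ)
        rw [ge_neutral hneu hgeF] at hF
        exact hyp A hAΔ Sc (SGe.refl _) ⟨0, UP.ax hneu hF⟩
  | @contrL B Γ Δ p ih =>
      intro f hΓ hΔ Sc hge hyp
      rw [Multiset.map_cons] at hge
      obtain ⟨F, hF, hgeF, hrest⟩ := hge.invCons
      apply contrAdm hF
      refine ih f ?_ hΔ (F ::ₘ Sc) ?_ ?_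
      · intro X hX
        rcases Multiset.mem_cons.1 hX with rfl | hX
        · exact hΓ X (Multiset.mem_cons_self _ _)
        · exact hΓ X hX
      · rw [Multiset.map_cons, Multiset.map_cons]
        exact SGe.consCons hgeF hge
      · intro B' hB' S' h1 h2
        exact hyp B' hB' S' (h1.trans (SGe.cons (SGe.refl Sc))) h2
  | @contrR B Γ Δ p ih =>
      intro f hΓ hΔ Sc hge hyp
      refine ih f hΓ ?_ Sc hge ?_
      · intro X hX
        rcases Multiset.mem_cons.1 hX with rfl | hX
        · exact hΔ X (Multiset.mem_cons_self _ _)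
        · exact hΔ X hX
      · intro B' hB' S' h1 h2
        rcases Multiset.mem_cons.1 hB' with rfl | hB'
        · exact hyp B' (Multiset.mem_cons_self _ _) S' h1 h2
        · exact hyp B' hB' S' h1 h2
  | @botR D Γ Δ p ih =>
      intro f hΓ hΔ Sc hge hyp
      refine ih f hΓ ?_ Sc hge ?_
      · intro X hX
        rcases Multiset.mem_cons.1 hX with rfl | hX
        · exact GFm.bot
        · exact hΔ X (Multiset.mem_cons_of_mem hX)
      · intro B' hB' S' h1 h2
        rcases Multiset.mem_cons.1 hB' with rfl | hB'
        · exact botFull h2 G₀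
        · exact hyp B' (Multiset.mem_cons_of_mem hB') S' h1 h2
  | @andL B D Γ Δ p ih =>
      intro f hΓ hΔ Sc hge hyp
      rw [Multiset.map_cons] at hge
      obtain ⟨F, hF, hgeF, hrest⟩ := hge.invCons
      have hFe := ge_conj hgeF
      subst hFe
      have hDall := hΓ (B.conj D) (Multiset.mem_cons_self _ _)
      have hmain : UPP G₀ ((fmap f B) ::ₘ (fmap f D) ::ₘ Sc) G₀ := by
        refine ih f ?_ hΔ _ ?_ ?_
        · intro X hX
          rcases Multiset.mem_cons.1 hX with rfl | hX
          · exact (DFm_conj hDall).1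
          rcases Multiset.mem_cons.1 hX with rfl | hX
          · exact (DFm_conj hDall).2
          · exact hΓ X hX
        · rw [Multiset.map_cons, Multiset.map_cons, Multiset.map_cons]
          exact SGe.consCons (Fm.ge.refl _) (SGe.consCons (Fm.ge.refl _) hge)
        · intro B' hB' S' h1 h2
          exact hyp B' hB' S' (h1.trans (SGe.cons (SGe.cons (SGe.refl Sc)))) h2
      exact andAbsorb hF hmain
  | @andR B D Γ Δ p q ihp ihq =>
      intro f hΓ hΔ Sc hge hyp
      have hGc := hΔ (B.conj D) (Multiset.mem_cons_self _ _)
      have hrest : ∀ X ∈ Δ, GFm X := fun X hX => hΔ X (Multiset.mem_cons_of_mem hX)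
      refine ihp f hΓ ?_ Sc hge ?_
      · intro X hX
        rcases Multiset.mem_cons.1 hX with rfl | hX
        · exact (GFm_conj hGc).1
        · exact hrest X hX
      · intro B' hB' S' h1 h2
        rcases Multiset.mem_cons.1 hB' with rfl | hB'
        · refine ihq f hΓ ?_ S' (h1.trans hge) ?_
          · intro X hX
            rcases Multiset.mem_cons.1 hX with rfl | hX
            · exact (GFm_conj hGc).2
            · exact hrest X hX
          · intro D' hD' S₂ h3 h4
            rcases Multiset.mem_cons.1 hD' with rfl | hD'
            · exact hyp _ (Multiset.mem_cons_self _ _) S₂ (h3.trans h1)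
                (UPP.andR' (h2.gw h3) h4)
            · exact hyp D' (Multiset.mem_cons_of_mem hD') S₂ (h3.trans h1) h4
        · exact hyp B' (Multiset.mem_cons_of_mem hB') S' h1 h2
  | @orL B D Γ Δ p q ihp ihq =>
      intro f hΓ hΔ Sc hge hyp
      rw [Multiset.map_cons] at hge
      obtain ⟨F, hF, hgeF, hrest⟩ := hge.invCons
      have hDor := hΓ (B.disj D) (Multiset.mem_cons_self _ _)
      have hΓB : ∀ X ∈ B ::ₘ Γ, DFm X := by
        intro X hX
        rcases Multiset.mem_cons.1 hX with rfl | hX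
        · exact (DFm_disj hDor).1
        · exact hΓ X (Multiset.mem_cons_of_mem hX)
      have hΓD : ∀ X ∈ D ::ₘ Γ, DFm X := by
        intro X hX
        rcases Multiset.mem_cons.1 hX with rfl | hX
        · exact (DFm_disj hDor).2
        · exact hΓ X (Multiset.mem_cons_of_mem hX)
      rcases ge_disj hgeF with hFe | hgeB | hgeD
      · subst hFe
        have h1 : UPP G₀ ((fmap f B) ::ₘ (Sc.erase ((fmap f B).disj (fmap f D)))) G₀ := by
          refine ihp f hΓB hΔ _ ?_ ?_
          · rw [Multiset.map_cons]
            exact SGe.consCons (Fm.ge.refl _) hrest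
          · intro B' hB' S' hs1 hs2
            refine hyp B' hB' S' (hs1.trans ?_) hs2
            conv_rhs => rw [← Multiset.cons_erase hF]
            exact SGe.consCons (Fm.ge.disjl (Fm.ge.refl _)) (SGe.refl _)
        have h2 : UPP G₀ ((fmap f D) ::ₘ (Sc.erase ((fmap f B).disj (fmap f D)))) G₀ := by
          refine ihq f hΓD hΔ _ ?_ ?_
          · rw [Multiset.map_cons]
            exact SGe.consCons (Fm.ge.refl _) hrest
          · intro B' hB' S' hs1 hs2
            refine hyp B' hB' S' (hs1.trans ?_) hs2
            conv_rhs => rw [← Multiset.cons_erase hF]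
            exact SGe.consCons (Fm.ge.disjr (Fm.ge.refl _)) (SGe.refl _)
        have := orAdm h1 h2
        rwa [Multiset.cons_erase hF] at this
      · refine ihp f hΓB hΔ Sc ?_ hyp
        rw [Multiset.map_cons, ← Multiset.cons_erase hF]
        exact SGe.consCons hgeB hrest
      · refine ihq f hΓD hΔ Sc ?_ hyp
        rw [Multiset.map_cons, ← Multiset.cons_erase hF]
        exact SGe.consCons hgeD hrest
  | @orR1 B D Γ Δ p ih =>
      intro f hΓ hΔ Sc hge hyp
      have hGc := hΔ (B.disj D) (Multiset.mem_cons_self _ _)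
      refine ih f hΓ ?_ Sc hge ?_
      · intro X hX
        rcases Multiset.mem_cons.1 hX with rfl | hX
        · exact (GFm_disj hGc).1
        · exact hΔ X (Multiset.mem_cons_of_mem hX)
      · intro B' hB' S' h1 h2
        rcases Multiset.mem_cons.1 hB' with rfl | hB'
        · exact hyp _ (Multiset.mem_cons_self _ _) S' h1 h2.orR1'
        · exact hyp B' (Multiset.mem_cons_of_mem hB') S' h1 h2
  | @orR2 B D Γ Δ p ih =>
      intro f hΓ hΔ Sc hge hyp
      have hGc := hΔ (B.disj D) (Multiset.mem_cons_self _ _)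
      refine ih f hΓ ?_ Sc hge ?_
      · intro X hX
        rcases Multiset.mem_cons.1 hX with rfl | hX
        · exact (GFm_disj hGc).2
        · exact hΔ X (Multiset.mem_cons_of_mem hX)
      · intro B' hB' S' h1 h2
        rcases Multiset.mem_cons.1 hB' with rfl | hB'
        · exact hyp _ (Multiset.mem_cons_self _ _) S' h1 h2.orR2'
        · exact hyp B' (Multiset.mem_cons_of_mem hB') S' h1 h2
  | @impL B D Γ Δ Θ p q ihp ihq =>
      intro f hΓ hΔ Sc hge hyp
      rw [Multiset.map_cons] at hge
      have hDimp := hΓ (B.imp D) (Multiset.mem_cons_self _ _)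
      have hΓD : ∀ X ∈ D ::ₘ Γ, DFm X := by
        intro X hX
        rcases Multiset.mem_cons.1 hX with rfl | hX
        · exact (DFm_imp hDimp).2
        · exact hΓ X (Multiset.mem_cons_of_mem hX)
      have hΘG : ∀ X ∈ Θ, GFm X := fun X hX => hΔ X (Multiset.mem_add.2 (Or.inr hX))
      refine ihp f hΓ ?_ Sc (by rw [Multiset.map_cons]; exact hge) ?_
      · intro X hX
        rcases Multiset.mem_cons.1 hX with rfl | hX
        · exact (DFm_imp hDimp).1
        · exact hΔ X (Multiset.mem_add.2 (Or.inl hX))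
      · intro B' hB' S' h1 h2
        rcases Multiset.mem_cons.1 hB' with hBB | hB'
        · -- B' = B : backchain through a partner of (fmap f B).imp (fmap f D) in S'
          rw [hBB] at h2
          have hcomp : SGe S' (((fmap f B).imp (fmap f D)) ::ₘ (Γ.map (fmap f))) :=
            h1.trans hge
          obtain ⟨F₂, hF₂, hgeF₂, hrest₂⟩ := hcomp.invCons
          rcases ge_imp hgeF₂ with hFe | hgeD2
          · subst hFe
            refine fireClause hF₂ h2 ?_
            refine ihq f hΓD hΘG ((fmap f D) ::ₘ S') ?_ ?_
            · rw [Multiset.map_cons]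
              exact SGe.consCons (Fm.ge.refl _) hcomp.dropR
            · intro B₂ hB₂ S₃ h3 h4
              exact hyp B₂ (Multiset.mem_add.2 (Or.inr hB₂)) S₃
                (h3.trans ((SGe.cons (SGe.refl S')).trans h1)) h4
          · refine ihq f hΓD hΘG S' ?_ ?_
            · rw [Multiset.map_cons, ← Multiset.cons_erase hF₂]
              exact SGe.consCons hgeD2 hrest₂
            · intro B₂ hB₂ S₃ h3 h4
              exact hyp B₂ (Multiset.mem_add.2 (Or.inr hB₂)) S₃ (h3.trans h1) h4
        · exact hyp B' (Multiset.mem_add.2 (Or.inl hB')) S' h1 h2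
  | @impR B D Γ Δ p ih =>
      intro f hΓ hΔ Sc hge hyp
      have hGimp := hΔ (B.imp D) (Multiset.mem_cons_self _ _)
      have hmain : UPP G₀ ((fmap f B) ::ₘ Sc) G₀ := by
        refine ih f ?_ ?_ _ ?_ ?_
        · intro X hX
          rcases Multiset.mem_cons.1 hX with rfl | hX
          · exact (GFm_imp hGimp).1
          · exact hΓ X hX
        · intro X hX
          rcases Multiset.mem_cons.1 hX with rfl | hX
          · exact (GFm_imp hGimp).2
          · exact hΔ X (Multiset.mem_cons_of_mem hX)
        · rw [Multiset.map_cons]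
          exact SGe.consCons (Fm.ge.refl _) hge
        · intro B' hB' S' h1 h2
          rcases Multiset.mem_cons.1 hB' with rfl | hB'
          · exact hyp _ (Multiset.mem_cons_self _ _) S'
              (h1.trans (SGe.cons (SGe.refl Sc)))
              ((h2.weaken (Multiset.le_cons_self _ _)).impR')
          · exact hyp B' (Multiset.mem_cons_of_mem hB') S'
              (h1.trans (SGe.cons (SGe.refl Sc))) h2
      exact hyp _ (Multiset.mem_cons_self _ _) Sc (SGe.refl _)
        ((restartFull hmain _).impR')
  | @allL B Γ Δ t p ih =>
      intro f hΓ hΔ Sc hge hyp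
      rw [Multiset.map_cons] at hge
      obtain ⟨F, hF, hgeF, hrest⟩ := hge.invCons
      have hFe := ge_all hgeF
      subst hFe
      have hDa := hΓ (Fm.all B) (Multiset.mem_cons_self _ _)
      have hmain : UPP G₀ (((fmap f B).inst (tmap f t)) ::ₘ Sc) G₀ := by
        refine ih f ?_ hΔ _ ?_ ?_
        · intro X hX
          rcases Multiset.mem_cons.1 hX with rfl | hX
          · exact DFm_inst (DFm_all hDa) t
          · exact hΓ X hX
        · rw [Multiset.map_cons, Multiset.map_cons, fmap_inst]
          exact SGe.consCons (Fm.ge.refl _) hge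
        · intro B' hB' S' h1 h2
          exact hyp B' hB' S' (h1.trans (SGe.cons (SGe.refl Sc))) h2
      exact allAbsorb hF hmain
  | @exR B Γ Δ t p ih =>
      intro f hΓ hΔ Sc hge hyp
      have hGe := hΔ (Fm.ex B) (Multiset.mem_cons_self _ _)
      refine ih f hΓ ?_ Sc hge ?_
      · intro X hX
        rcases Multiset.mem_cons.1 hX with rfl | hX
        · exact GFm_inst (GFm_ex hGe) t
        · exact hΔ X (Multiset.mem_cons_of_mem hX)
      · intro B' hB' S' h1 h2
        rcases Multiset.mem_cons.1 hB' with rfl | hB'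
        · rw [fmap_inst] at h2
          exact hyp _ (Multiset.mem_cons_self _ _) S' h1
            (UPP.exR' (tmap f t) h2)
        · exact hyp B' (Multiset.mem_cons_of_mem hB') S' h1 h2
  | @exL B Γ Δ c hc p ih =>
      intro f hΓ hΔ Sc hge hyp
      rw [Multiset.map_cons] at hge
      obtain ⟨F, hF, hgeF, hrest⟩ := hge.invCons
      have hcB : ¬ Fm.constIn c B := hc.1 (Fm.ex B) (Multiset.mem_cons_self _ _)
      have hcΓ : ∀ X ∈ Γ, ¬ Fm.constIn c X := fun X hX =>
        hc.1 X (Multiset.mem_cons_of_mem hX)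
      have hcΔ : ∀ X ∈ Δ, ¬ Fm.constIn c X := hc.2
      have hDe := hΓ (Fm.ex B) (Multiset.mem_cons_self _ _)
      have hΓ' : ∀ X ∈ (B.inst (Tm.const c)) ::ₘ Γ, DFm X := by
        intro X hX
        rcases Multiset.mem_cons.1 hX with rfl | hX
        · exact DFm_inst (DFm_ex hDe) _
        · exact hΓ X (Multiset.mem_cons_of_mem hX)
      rcases ge_ex hgeF with hFe | ⟨d₀, hged⟩
      · subst hFe
        set S₂ := Sc.erase (Fm.ex (fmap f B)) with hS₂
        set T : Multiset Fm := (fmap f B) ::ₘ G₀ ::ₘ ((Γ.map (fmap f)) + S₂) with hT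
        set e : ℕ := msB T with heq
        have hfr := msB_fresh (le_refl (msB T))
        have heB : ¬ Fm.constIn e (fmap f B) := hfr _ (by simp [hT])
        have heG : ¬ Fm.constIn e G₀ := hfr _ (by simp [hT])
        have heS₂ : ∀ F' ∈ S₂, ¬ Fm.constIn e F' := fun F' h' =>
          hfr _ (by simp [hT, Multiset.mem_add, h'])
        set f' : ℕ → ℕ := fun x => if x = c then e else f x with hf'
        have e1 : fmap f' (B.inst (Tm.const c)) = (fmap f B).inst (Tm.const e) := by
          rw [fmap_inst_const]
          have : f' c = e := by simp [hf']
          rw [this]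
          congr 1
          exact fmap_congr (fun x hx => by
            have hxc : x ≠ c := fun hh => hcB (hh ▸ hx)
            simp [hf', hxc])
        have e2 : Γ.map (fmap f') = Γ.map (fmap f) := by
          apply Multiset.map_congr rfl
          intro X hX
          exact fmap_congr (fun x hx => by
            have hxc : x ≠ c := fun hh => hcΓ X hX (hh ▸ hx)
            simp [hf', hxc])
        have key : UPP G₀ (((fmap f B).inst (Tm.const e)) ::ₘ (Fm.ex (fmap f B)) ::ₘ S₂)
            G₀ := by
          refine ih f' hΓ' hΔ _ ?_ ?_
          · rw [Multiset.map_cons, e1, e2]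
            exact SGe.consCons (Fm.ge.refl _) (SGe.cons hrest)
          · intro B' hB' S' h1 h2
            have e3 : fmap f' B' = fmap f B' := fmap_congr (fun x hx => by
              have hxc : x ≠ c := fun hh => hcΔ B' hB' (hh ▸ hx)
              simp [hf', hxc])
            rw [e3] at h2
            refine hyp B' hB' S' (h1.trans ?_) h2
            conv_rhs => rw [← Multiset.cons_erase hF]
            exact SGe.cons (SGe.refl _)
        have := exAdm heB heS₂ heG key
        rwa [Multiset.cons_erase hF] at this
      · set f' : ℕ → ℕ := fun x => if x = c then d₀ else f x with hf'
        have e1 : fmap f' (B.inst (Tm.const c)) = (fmap f B).inst (Tm.const d₀) := by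
          rw [fmap_inst_const]
          have : f' c = d₀ := by simp [hf']
          rw [this]
          congr 1
          exact fmap_congr (fun x hx => by
            have hxc : x ≠ c := fun hh => hcB (hh ▸ hx)
            simp [hf', hxc])
        have e2 : Γ.map (fmap f') = Γ.map (fmap f) := by
          apply Multiset.map_congr rfl
          intro X hX
          exact fmap_congr (fun x hx => by
            have hxc : x ≠ c := fun hh => hcΓ X hX (hh ▸ hx)
            simp [hf', hxc])
        refine ih f' hΓ' hΔ Sc ?_ ?_
        · rw [Multiset.map_cons, e1, e2, ← Multiset.cons_erase hF]
          exact SGe.consCons hged hrest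
        · intro B' hB' S' h1 h2
          have e3 : fmap f' B' = fmap f B' := fmap_congr (fun x hx => by
            have hxc : x ≠ c := fun hh => hcΔ B' hB' (hh ▸ hx)
            simp [hf', hxc])
          rw [e3] at h2
          exact hyp B' hB' S' h1 h2
  | @allR B Γ Δ c hc p ih =>
      intro f hΓ hΔ Sc hge hyp
      exact absurd (hΔ (Fm.all B) (Multiset.mem_cons_self _ _)) GFm_all

end St16

namespace St16

def castC {Γ Γ' Δ Δ' : Multiset Fm} (hΓ : Γ = Γ') (hΔ : Δ = Δ') (p : CProof Γ Δ) :
    CProof Γ' Δ' := hΓ ▸ hΔ ▸ p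

theorem castC_isUniform {Γ Γ' Δ Δ' : Multiset Fm} (hΓ : Γ = Γ') (hΔ : Δ = Δ')
    (p : CProof Γ Δ) (h : p.isUniform) : (castC hΓ hΔ p).isUniform := by
  subst hΓ; subst hΔ; exact h

theorem exU {Γ Γ' Δ Δ' : Multiset Fm} (hΓ : Γ = Γ') (hΔ : Δ = Δ') :
    (∃ q : CProof Γ Δ, q.isUniform) → ∃ q : CProof Γ' Δ', q.isUniform :=
  fun ⟨q, hq⟩ => ⟨castC hΓ hΔ q, castC_isUniform _ _ _ hq⟩

theorem neutralM_single {C : Fm} (h : C.neutral) :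
    CProof.neutralM ({C} : Multiset Fm) := by
  intro F hF
  rw [Multiset.mem_singleton.1 hF]
  exact h

theorem swap3 (a b c : Fm) (S : Multiset Fm) :
    a ::ₘ b ::ₘ c ::ₘ S = b ::ₘ c ::ₘ a ::ₘ S := by
  rw [Multiset.cons_swap a b, Multiset.cons_swap a c]

theorem swap4 (a b c d : Fm) (S : Multiset Fm) :
    a ::ₘ b ::ₘ c ::ₘ d ::ₘ S = b ::ₘ c ::ₘ d ::ₘ a ::ₘ S := by
  rw [Multiset.cons_swap a b, Multiset.cons_swap a c, Multiset.cons_swap a d]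

theorem botLeaf {S : Multiset Fm} {C : Fm} (hC : C.neutral) :
    ∃ q : CProof (Fm.bot ::ₘ S) ({C} : Multiset Fm), q.isUniform := by
  rcases neutral_cases C hC with ⟨p, ts, rfl⟩ | rfl
  · refine ⟨CProof.botR (D := Fm.atom p ts) (Δ := 0) (CProof.ax ?_), ?_⟩
    · exact Or.inr ⟨Fm.bot, Or.inl rfl, Multiset.mem_cons_self _ _, Multiset.mem_cons_self _ _⟩
    · refine ⟨by simp, neutralM_single (neutral_atom p ts), ?_⟩
      show Multiset.card ({Fm.bot} : Multiset Fm) = 1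
      simp
  · refine ⟨CProof.ax (Or.inr ⟨Fm.bot, Or.inl rfl, Multiset.mem_cons_self _ _,
      Multiset.mem_singleton_self _⟩), ?_⟩
    show Multiset.card ({Fm.bot} : Multiset Fm) = 1
    simp

theorem constIn_neg {d : ℕ} {G₀ : Fm} (h : ¬ Fm.constIn d G₀) :
    ¬ Fm.constIn d (G₀.imp Fm.bot) := by
  intro hc
  rcases hc with hc | hc
  · exact h hc
  · exact hc

/-- Translation of `UP` derivations into uniform proofs with `G₀⊃⊥` on the left. -/
theorem up_to_uniform {G₀ : Fm} : ∀ {n : ℕ} {S : Multiset Fm} {C : Fm}, UP G₀ n S C →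
    ∃ q : CProof ((G₀.imp Fm.bot) ::ₘ S) ({C} : Multiset Fm), q.isUniform := by
  intro n S C h
  induction h with
  | @ax n S C hC hm =>
      refine ⟨CProof.ax (Or.inr ⟨C, ?_, Multiset.mem_cons_of_mem hm,
        Multiset.mem_singleton_self C⟩), ?_⟩
      · rcases hC with h | h
        exacts [Or.inr h, Or.inl h]
      · show Multiset.card ({C} : Multiset Fm) = 1
        simp
  | @top n S =>
      refine ⟨CProof.ax (Or.inl (Multiset.mem_singleton_self _)), ?_⟩
      show Multiset.card ({Fm.top} : Multiset Fm) = 1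
      simp
  | @restart n S C hC p ih =>
      obtain ⟨q, hq⟩ := ih
      obtain ⟨q2, hq2⟩ := botLeaf (S := S) hC
      refine exU rfl (zero_add _) ⟨CProof.impL (Δ := 0) (Θ := {C}) q q2, by simp, ?_, hq, hq2⟩
      intro F hF
      rw [zero_add] at hF
      rw [Multiset.mem_singleton.1 hF]
      exact hC
  | @botRed n S C hC p ih =>
      obtain ⟨q, hq⟩ := ih
      refine ⟨CProof.botR (D := C) (Δ := 0) q, ?_⟩
      exact ⟨by simp, neutralM_single hC, hq⟩
  | @contrL n A S C hC p ih =>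
      obtain ⟨q, hq⟩ := ih
      refine exU (Multiset.cons_swap _ _ _) rfl
        ⟨CProof.contrL (castC (swap3 _ _ _ _) rfl q), ?_⟩
      exact ⟨by simp, neutralM_single hC, castC_isUniform _ _ _ hq⟩
  | @andL n X Y S C hC p ih =>
      obtain ⟨q, hq⟩ := ih
      refine exU (Multiset.cons_swap _ _ _) rfl
        ⟨CProof.andL (castC (swap4 _ _ _ _ _) rfl q), ?_⟩
      exact ⟨by simp, neutralM_single hC, castC_isUniform _ _ _ hq⟩
  | @orL n X Y S C hC p q ih1 ih2 =>
      obtain ⟨q1, hq1⟩ := ih1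
      obtain ⟨q2, hq2⟩ := ih2
      refine exU (Multiset.cons_swap _ _ _) rfl
        ⟨CProof.orL (castC (Multiset.cons_swap _ _ _) rfl q1)
          (castC (Multiset.cons_swap _ _ _) rfl q2), ?_⟩
      exact ⟨by simp, neutralM_single hC, castC_isUniform _ _ _ hq1,
        castC_isUniform _ _ _ hq2⟩
  | @impL n X Y S C hC p q ih1 ih2 =>
      obtain ⟨q1, hq1⟩ := ih1
      obtain ⟨q2, hq2⟩ := ih2
      refine exU (Multiset.cons_swap _ _ _) (zero_add _)
        ⟨CProof.impL (Δ := 0) (Θ := {C}) (castC (Multiset.cons_swap _ _ _) rfl q1)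
          (castC (Multiset.cons_swap _ _ _) rfl q2), ?_⟩
      refine ⟨by simp, ?_, castC_isUniform _ _ _ hq1, castC_isUniform _ _ _ hq2⟩
      intro F hF
      rw [zero_add] at hF
      rw [Multiset.mem_singleton.1 hF]
      exact hC
  | @allL n P S C hC t p ih =>
      obtain ⟨q, hq⟩ := ih
      refine exU (Multiset.cons_swap _ _ _) rfl
        ⟨CProof.allL t (castC (swap3 _ _ _ _) rfl q), ?_⟩
      exact ⟨by simp, neutralM_single hC, castC_isUniform _ _ _ hq⟩
  | @exL n P S C hC p ih =>
      set T : Multiset Fm := P ::ₘ C ::ₘ G₀ ::ₘ S with hT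
      set d : ℕ := msB T with hd
      have hfr : ∀ F ∈ T, ¬ Fm.constIn d F := msB_fresh (le_refl _)
      have hdP : ¬ Fm.constIn d P := hfr P (by simp [hT])
      have hdC : ¬ Fm.constIn d C := hfr C (by simp [hT])
      have hdG : ¬ Fm.constIn d G₀ := hfr G₀ (by simp [hT])
      have hdS : ∀ F ∈ S, ¬ Fm.constIn d F := fun F hF => hfr F (by simp [hT, hF])
      obtain ⟨q, hq⟩ := ih d ⟨hdP, hdS, hdC, hdG⟩
      have hcfresh : FreshSeq d ((Fm.ex P) ::ₘ (G₀.imp Fm.bot) ::ₘ S)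
          ({C} : Multiset Fm) := by
        constructor
        · intro F hF
          rcases Multiset.mem_cons.1 hF with rfl | hF
          · exact hdP
          rcases Multiset.mem_cons.1 hF with rfl | hF
          · exact constIn_neg hdG
          · exact hdS F hF
        · intro F hF
          rw [Multiset.mem_singleton.1 hF]
          exact hdC
      refine exU (Multiset.cons_swap _ _ _) rfl
        ⟨CProof.exL d hcfresh (castC (Multiset.cons_swap _ _ _) rfl q), ?_⟩
      exact ⟨by simp, neutralM_single hC, castC_isUniform _ _ _ hq⟩
  | @andR n S A B p q ih1 ih2 =>
      obtain ⟨q1, hq1⟩ := ih1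
      obtain ⟨q2, hq2⟩ := ih2
      exact ⟨CProof.andR (Δ := 0) q1 q2, by simp, hq1, hq2⟩
  | @orR1 n S A B p ih =>
      obtain ⟨q, hq⟩ := ih
      exact ⟨CProof.orR1 (Δ := 0) q, by simp, hq⟩
  | @orR2 n S A B p ih =>
      obtain ⟨q, hq⟩ := ih
      exact ⟨CProof.orR2 (Δ := 0) q, by simp, hq⟩
  | @impR n S A B p ih =>
      obtain ⟨q, hq⟩ := ih
      exact ⟨CProof.impR (Δ := 0) (castC (Multiset.cons_swap _ _ _) rfl q),
        by simp, castC_isUniform _ _ _ hq⟩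
  | @exR n S B t p ih =>
      obtain ⟨q, hq⟩ := ih
      exact ⟨CProof.exR (Δ := 0) t q, by simp, hq⟩
  | @allR n S B p ih =>
      set T : Multiset Fm := B ::ₘ (Fm.all B) ::ₘ G₀ ::ₘ S with hT
      set d : ℕ := msB T with hd
      have hfr : ∀ F ∈ T, ¬ Fm.constIn d F := msB_fresh (le_refl _)
      have hdB : ¬ Fm.constIn d B := hfr B (by simp [hT])
      have hdA : ¬ Fm.constIn d (Fm.all B) := hfr _ (by simp [hT])
      have hdG : ¬ Fm.constIn d G₀ := hfr G₀ (by simp [hT])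
      have hdS : ∀ F ∈ S, ¬ Fm.constIn d F := fun F hF => hfr F (by simp [hT, hF])
      obtain ⟨q, hq⟩ := ih d ⟨hdB, hdS, hdA, hdG⟩
      have hcfresh : FreshSeq d ((G₀.imp Fm.bot) ::ₘ S)
          ((Fm.all B) ::ₘ (0 : Multiset Fm)) := by
        constructor
        · intro F hF
          rcases Multiset.mem_cons.1 hF with rfl | hF
          · exact constIn_neg hdG
          · exact hdS F hF
        · intro F hF
          rcases Multiset.mem_cons.1 hF with rfl | hF
          · exact hdA
          · exact absurd hF (Multiset.notMem_zero F)
      exact ⟨CProof.allR (Δ := 0) d hcfresh q, by simp, hq⟩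

end St16

namespace St16

theorem mmap_id (S : Multiset Fm) : S.map (fmap id) = S := by
  have : S.map (fmap id) = S.map id := Multiset.map_congr rfl (fun F _ => fmap_id F)
  rw [this, Multiset.map_id]

theorem castN {Γ Γ' Δ Δ' : Multiset Fm} (hΓ : Γ = Γ') (hΔ : Δ = Δ') :
    Nonempty (CProof Γ Δ) → Nonempty (CProof Γ' Δ') :=
  fun ⟨p⟩ => ⟨castC hΓ hΔ p⟩

theorem wcons (W : Multiset Fm) (f : ℕ → ℕ) (a : Fm) (Γ : Multiset Fm) :
    W + ((a ::ₘ Γ).map (fmap f)) = (fmap f a) ::ₘ (W + Γ.map (fmap f)) := by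
  rw [Multiset.map_cons, addc]

theorem e_f {f : ℕ → ℕ} {c c' : ℕ} {A : Fm} (hA : ¬ Fm.constIn c A) :
    fmap (fun x => if x = c then c' else f x) A = fmap f A :=
  fmap_congr (fun x hx => by
    have : x ≠ c := fun hh => hA (hh ▸ hx)
    simp [this])

theorem e_map {f : ℕ → ℕ} {c c' : ℕ} {S : Multiset Fm} (hS : ∀ F ∈ S, ¬ Fm.constIn c F) :
    S.map (fmap (fun x => if x = c then c' else f x)) = S.map (fmap f) :=
  Multiset.map_congr rfl (fun F hF => e_f (hS F hF))

theorem e_inst {f : ℕ → ℕ} {c c' : ℕ} {B : Fm} (hB : ¬ Fm.constIn c B) :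
    fmap (fun x => if x = c then c' else f x) (B.inst (Tm.const c))
      = (fmap f B).inst (Tm.const c') := by
  rw [fmap_inst_const]
  rw [if_pos rfl, e_f hB]

/-- Weakening combined with renaming for classical proofs. -/
theorem weakenC : ∀ {Γ Δ : Multiset Fm} (p : CProof Γ Δ) (f : ℕ → ℕ)
    (Γw Δw : Multiset Fm),
    Nonempty (CProof (Γw + Γ.map (fmap f)) (Δw + Δ.map (fmap f))) := by
  intro Γ Δ p
  induction p with
  | @ax Γ Δ h =>
      intro f Γw Δw
      refine ⟨CProof.ax ?_⟩
      rcases h with hTop | ⟨A, hA, hAΓ, hAΔ⟩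
      · exact Or.inl (Multiset.mem_add.2 (Or.inr (Multiset.mem_map.2 ⟨Fm.top, hTop, rfl⟩)))
      · refine Or.inr ⟨fmap f A, ?_, Multiset.mem_add.2 (Or.inr
          (Multiset.mem_map_of_mem _ hAΓ)), Multiset.mem_add.2 (Or.inr
          (Multiset.mem_map_of_mem _ hAΔ))⟩
        rcases hA with rfl | hA
        · exact Or.inl rfl
        · exact Or.inr (isAtom_fmap hA)
  | @contrL B Γ Δ p ih =>
      intro f Γw Δw
      refine castN (wcons Γw f B Γ).symm rfl ?_
      obtain ⟨q⟩ := ih f Γw Δw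
      exact ⟨CProof.contrL (castC (by rw [wcons, wcons]; try rfl) rfl q)⟩
  | @contrR B Γ Δ p ih =>
      intro f Γw Δw
      refine castN rfl (wcons Δw f B Δ).symm ?_
      obtain ⟨q⟩ := ih f Γw Δw
      exact ⟨CProof.contrR (castC rfl (by rw [wcons, wcons]; try rfl) q)⟩
  | @botR D Γ Δ p ih =>
      intro f Γw Δw
      refine castN rfl (wcons Δw f D Δ).symm ?_
      obtain ⟨q⟩ := ih f Γw Δw
      exact ⟨CProof.botR (castC rfl (by rw [wcons]; try rfl) q)⟩
  | @andL B D Γ Δ p ih =>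
      intro f Γw Δw
      refine castN (wcons Γw f (B.conj D) Γ).symm rfl ?_
      obtain ⟨q⟩ := ih f Γw Δw
      exact ⟨CProof.andL (castC (by rw [wcons, wcons, wcons]; try rfl) rfl q)⟩
  | @andR B D Γ Δ p q ihp ihq =>
      intro f Γw Δw
      refine castN rfl (wcons Δw f (B.conj D) Δ).symm ?_
      obtain ⟨q1⟩ := ihp f Γw Δw
      obtain ⟨q2⟩ := ihq f Γw Δw
      exact ⟨CProof.andR (castC rfl (by rw [wcons]; try rfl) q1) (castC rfl (by rw [wcons]; try rfl) q2)⟩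
  | @orL B D Γ Δ p q ihp ihq =>
      intro f Γw Δw
      refine castN (wcons Γw f (B.disj D) Γ).symm rfl ?_
      obtain ⟨q1⟩ := ihp f Γw Δw
      obtain ⟨q2⟩ := ihq f Γw Δw
      exact ⟨CProof.orL (castC (by rw [wcons]; try rfl) rfl q1) (castC (by rw [wcons]; try rfl) rfl q2)⟩
  | @orR1 B D Γ Δ p ih =>
      intro f Γw Δw
      refine castN rfl (wcons Δw f (B.disj D) Δ).symm ?_
      obtain ⟨q⟩ := ih f Γw Δw
      exact ⟨CProof.orR1 (castC rfl (by rw [wcons]; try rfl) q)⟩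
  | @orR2 B D Γ Δ p ih =>
      intro f Γw Δw
      refine castN rfl (wcons Δw f (B.disj D) Δ).symm ?_
      obtain ⟨q⟩ := ih f Γw Δw
      exact ⟨CProof.orR2 (castC rfl (by rw [wcons]; try rfl) q)⟩
  | @impL B D Γ Δ Θ p q ihp ihq =>
      intro f Γw Δw
      obtain ⟨q1⟩ := ihp f Γw Δw
      obtain ⟨q2⟩ := ihq f Γw 0
      have q1' := castC (by rw [wcons]; try rfl) (by rw [wcons]; try rfl) q1
      have q2' := castC (by rw [wcons]; try rfl) (zero_add _) q2
      refine castN (by rw [wcons]; try rfl) ?_ ⟨CProof.impL q1' q2'⟩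
      rw [Multiset.map_add, ← add_assoc]
  | @impR B D Γ Δ p ih =>
      intro f Γw Δw
      refine castN rfl (wcons Δw f (B.imp D) Δ).symm ?_
      obtain ⟨q⟩ := ih f Γw Δw
      exact ⟨CProof.impR (castC (by rw [wcons]; try rfl) (by rw [wcons]; try rfl) q)⟩
  | @allL B Γ Δ t p ih =>
      intro f Γw Δw
      refine castN (wcons Γw f (Fm.all B) Γ).symm rfl ?_
      obtain ⟨q⟩ := ih f Γw Δw
      exact ⟨CProof.allL (tmap f t) (castC (by rw [wcons, wcons, fmap_inst]; try rfl) rfl q)⟩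
  | @exR B Γ Δ t p ih =>
      intro f Γw Δw
      refine castN rfl (wcons Δw f (Fm.ex B) Δ).symm ?_
      obtain ⟨q⟩ := ih f Γw Δw
      exact ⟨CProof.exR (tmap f t) (castC rfl (by rw [wcons, fmap_inst]; try rfl) q)⟩
  | @exL B Γ Δ c hc p ih =>
      intro f Γw Δw
      have hcB : ¬ Fm.constIn c B := hc.1 (Fm.ex B) (Multiset.mem_cons_self _ _)
      have hcΓ : ∀ X ∈ Γ, ¬ Fm.constIn c X := fun X hX =>
        hc.1 X (Multiset.mem_cons_of_mem hX)
      have hcΔ : ∀ X ∈ Δ, ¬ Fm.constIn c X := hc.2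
      set T : Multiset Fm := (fmap f B) ::ₘ ((Γw + Γ.map (fmap f)) + (Δw + Δ.map (fmap f)))
        with hT
      set c' : ℕ := msB T with hc'
      have hfr : ∀ F ∈ T, ¬ Fm.constIn c' F := msB_fresh (le_refl _)
      have hB' : ¬ Fm.constIn c' (fmap f B) := hfr _ (by simp [hT])
      have hΓ' : ∀ F ∈ Γw + Γ.map (fmap f), ¬ Fm.constIn c' F := by
        intro F hF
        refine hfr _ ?_
        rw [hT]
        exact Multiset.mem_cons_of_mem (Multiset.mem_add.2 (Or.inl hF))
      have hΔ' : ∀ F ∈ Δw + Δ.map (fmap f), ¬ Fm.constIn c' F := by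
        intro F hF
        refine hfr _ ?_
        rw [hT]
        exact Multiset.mem_cons_of_mem (Multiset.mem_add.2 (Or.inr hF))
      obtain ⟨q⟩ := ih (fun x => if x = c then c' else f x) Γw Δw
      rw [wcons, e_inst hcB, e_map hcΓ, e_map hcΔ] at q
      have hfs : FreshSeq c' ((Fm.ex (fmap f B)) ::ₘ (Γw + Γ.map (fmap f)))
          (Δw + Δ.map (fmap f)) := by
        constructor
        · intro F hF
          rcases Multiset.mem_cons.1 hF with rfl | hF
          · exact hB'
          · exact hΓ' F hF
        · exact hΔ'
      exact castN (wcons Γw f (Fm.ex B) Γ).symm rfl ⟨CProof.exL c' hfs q⟩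
  | @allR B Γ Δ c hc p ih =>
      intro f Γw Δw
      have hcB : ¬ Fm.constIn c B := hc.2 (Fm.all B) (Multiset.mem_cons_self _ _)
      have hcΓ : ∀ X ∈ Γ, ¬ Fm.constIn c X := hc.1
      have hcΔ : ∀ X ∈ Δ, ¬ Fm.constIn c X := fun X hX =>
        hc.2 X (Multiset.mem_cons_of_mem hX)
      set T : Multiset Fm := (fmap f B) ::ₘ ((Γw + Γ.map (fmap f)) + (Δw + Δ.map (fmap f)))
        with hT
      set c' : ℕ := msB T with hc'
      have hfr : ∀ F ∈ T, ¬ Fm.constIn c' F := msB_fresh (le_refl _)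
      have hB' : ¬ Fm.constIn c' (fmap f B) := hfr _ (by simp [hT])
      have hΓ' : ∀ F ∈ Γw + Γ.map (fmap f), ¬ Fm.constIn c' F := by
        intro F hF
        refine hfr _ ?_
        rw [hT]
        exact Multiset.mem_cons_of_mem (Multiset.mem_add.2 (Or.inl hF))
      have hΔ' : ∀ F ∈ Δw + Δ.map (fmap f), ¬ Fm.constIn c' F := by
        intro F hF
        refine hfr _ ?_
        rw [hT]
        exact Multiset.mem_cons_of_mem (Multiset.mem_add.2 (Or.inr hF))
      obtain ⟨q⟩ := ih (fun x => if x = c then c' else f x) Γw Δw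
      rw [wcons, e_inst hcB, e_map hcΓ, e_map hcΔ] at q
      have hfs : FreshSeq c' (Γw + Γ.map (fmap f))
          ((Fm.all (fmap f B)) ::ₘ (Δw + Δ.map (fmap f))) := by
        constructor
        · exact hΓ'
        · intro F hF
          rcases Multiset.mem_cons.1 hF with rfl | hF
          · exact hB'
          · exact hΔ' F hF
      exact castN rfl (wcons Δw f (Fm.all B) Δ).symm ⟨CProof.allR c' hfs q⟩

end St16

namespace St16

theorem split_cons {N B : Fm} {S Γ : Multiset Fm} {k : ℕ}
    (h : B ::ₘ S = Multiset.replicate k N + Γ) :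
    (B = N ∧ ∃ k', k = k' + 1 ∧ S = Multiset.replicate k' N + Γ) ∨
    (∃ Γ', Γ = B ::ₘ Γ' ∧ S = Multiset.replicate k N + Γ') := by
  by_cases hB : B = N
  · subst hB
    cases k with
    | zero =>
        right
        simp only [Multiset.replicate_zero, zero_add] at h ⊢
        exact ⟨S, h.symm, by simp⟩
    | succ k' =>
        left
        refine ⟨rfl, k', rfl, ?_⟩
        rw [Multiset.replicate_succ, Multiset.cons_add] at h
        exact (Multiset.cons_inj_right _).1 h
  · right
    have hBmem : B ∈ Multiset.replicate k N + Γ := by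
      rw [← h]; exact Multiset.mem_cons_self B S
    have hBΓ : B ∈ Γ := by
      rcases Multiset.mem_add.1 hBmem with hm | hm
      · exact absurd (Multiset.mem_replicate.1 hm).2 hB
      · exact hm
    obtain ⟨Γ', rfl⟩ := Multiset.exists_cons_of_mem hBΓ
    refine ⟨Γ', rfl, ?_⟩
    rw [addc] at h
    exact (Multiset.cons_inj_right _).1 h

theorem contrDup {G₀ : Fm} : ∀ (k : ℕ) {Γ X : Multiset Fm},
    Nonempty (CProof Γ (Multiset.replicate k G₀ + (Multiset.replicate k G₀ + X))) →
    Nonempty (CProof Γ (Multiset.replicate k G₀ + X)) := by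
  intro k
  induction k with
  | zero => intro Γ X h; simpa using h
  | succ k ih =>
      intro Γ X h
      have e1 : Multiset.replicate (k+1) G₀ + (Multiset.replicate (k+1) G₀ + X)
          = G₀ ::ₘ G₀ ::ₘ (Multiset.replicate k G₀ + (Multiset.replicate k G₀ + X)) := by
        simp [Multiset.cons_add, addc]
      obtain ⟨q⟩ := h
      have q2 := CProof.contrR (castC rfl e1 q)
      have e2 : G₀ ::ₘ (Multiset.replicate k G₀ + (Multiset.replicate k G₀ + X))
          = Multiset.replicate k G₀ + (Multiset.replicate k G₀ + (G₀ ::ₘ X)) := by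
        rw [addc, addc]
      have h3 := ih (X := G₀ ::ₘ X) ⟨castC rfl e2 q2⟩
      refine castN rfl ?_ h3
      rw [addc, Multiset.replicate_succ, Multiset.cons_add]

/-- Inversion: delete copies of `G₀⊃⊥` from the antecedent, adding copies of
`G₀` to the succedent. -/
theorem inv {G₀ : Fm} : ∀ {Sg Δc : Multiset Fm} (p : CProof Sg Δc) (k : ℕ)
    (Γ : Multiset Fm), Sg = Multiset.replicate k (G₀.imp Fm.bot) + Γ →
    Nonempty (CProof Γ (Multiset.replicate k G₀ + Δc)) := by
  intro Sg Δc p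
  induction p with
  | @ax Γ₀ Δ₀ h =>
      intro k Γ hS
      refine ⟨CProof.ax ?_⟩
      rcases h with hTop | ⟨A, hA, hAΓ, hAΔ⟩
      · exact Or.inl (Multiset.mem_add.2 (Or.inr hTop))
      · rw [hS] at hAΓ
        rcases Multiset.mem_add.1 hAΓ with hm | hm
        · exfalso
          have hAN := (Multiset.mem_replicate.1 hm).2
          rcases hA with h1 | h1
          · rw [hAN] at h1; simp at h1
          · rw [hAN] at h1; simp [Fm.isAtom] at h1
        · exact Or.inr ⟨A, hA, hm, Multiset.mem_add.2 (Or.inr hAΔ)⟩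
  | @contrL B Γ₀ Δ₀ p ih =>
      intro k Γ hS
      rcases split_cons hS with ⟨hBN, k', rfl, hS'⟩ | ⟨Γ', rfl, hS'⟩
      · subst hBN
        have h := ih (k'+2) Γ (by simp [hS', Multiset.cons_add])
        obtain ⟨q⟩ := h
        have e1 : Multiset.replicate (k'+2) G₀ + Δ₀
            = G₀ ::ₘ G₀ ::ₘ (Multiset.replicate k' G₀ + Δ₀) := by
          simp [Multiset.cons_add]
        have q2 := CProof.contrR (castC rfl e1 q)
        refine ⟨castC rfl ?_ q2⟩
        rw [Multiset.replicate_succ, Multiset.cons_add]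
      · have h := ih k (B ::ₘ B ::ₘ Γ') (by rw [hS', addc, addc])
        obtain ⟨q⟩ := h
        exact ⟨CProof.contrL q⟩
  | @contrR B Γ₀ Δ₀ p ih =>
      intro k Γ hS
      obtain ⟨q⟩ := ih k Γ hS
      have q2 := CProof.contrR (castC rfl (by rw [addc, addc]) q)
      exact ⟨castC rfl (addc _ _ _).symm q2⟩
  | @botR D Γ₀ Δ₀ p ih =>
      intro k Γ hS
      obtain ⟨q⟩ := ih k Γ hS
      have q2 := CProof.botR (D := D) (castC rfl (addc _ _ _) q)
      exact ⟨castC rfl (addc _ _ _).symm q2⟩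
  | @andL B D Γ₀ Δ₀ p ih =>
      intro k Γ hS
      rcases split_cons hS with ⟨hBN, _⟩ | ⟨Γ', rfl, hS'⟩
      · exfalso; simp at hBN
      · obtain ⟨q⟩ := ih k (B ::ₘ D ::ₘ (B.conj D) ::ₘ Γ') (by rw [hS', addc, addc, addc])
        exact ⟨CProof.andL q⟩
  | @andR B D Γ₀ Δ₀ p q ihp ihq =>
      intro k Γ hS
      obtain ⟨q1⟩ := ihp k Γ hS
      obtain ⟨q2⟩ := ihq k Γ hS
      have q3 := CProof.andR (castC rfl (addc _ _ _) q1) (castC rfl (addc _ _ _) q2)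
      exact ⟨castC rfl (addc _ _ _).symm q3⟩
  | @orL B D Γ₀ Δ₀ p q ihp ihq =>
      intro k Γ hS
      rcases split_cons hS with ⟨hBN, _⟩ | ⟨Γ', rfl, hS'⟩
      · exfalso; simp at hBN
      · obtain ⟨q1⟩ := ihp k (B ::ₘ Γ') (by rw [hS', addc])
        obtain ⟨q2⟩ := ihq k (D ::ₘ Γ') (by rw [hS', addc])
        exact ⟨CProof.orL q1 q2⟩
  | @orR1 B D Γ₀ Δ₀ p ih =>
      intro k Γ hS
      obtain ⟨q⟩ := ih k Γ hS
      have q2 := CProof.orR1 (D := D) (castC rfl (addc _ _ _) q)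
      exact ⟨castC rfl (addc _ _ _).symm q2⟩
  | @orR2 B D Γ₀ Δ₀ p ih =>
      intro k Γ hS
      obtain ⟨q⟩ := ih k Γ hS
      have q2 := CProof.orR2 (B := B) (castC rfl (addc _ _ _) q)
      exact ⟨castC rfl (addc _ _ _).symm q2⟩
  | @impL B D Γ₀ Δ₁ Θ p q ihp ihq =>
      intro k Γ hS
      rcases split_cons hS with ⟨hBN, k', rfl, hS'⟩ | ⟨Γ', rfl, hS'⟩
      · -- the principal implication is a copy of G₀ ⊃ ⊥
        have h1 : G₀ = B := by injection hBN with h1 h2; exact h1.symm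
        have h2 : Fm.bot = D := by injection hBN with h1 h2; exact h2.symm
        subst h1; subst h2
        obtain ⟨q1⟩ := ihp (k'+1) Γ hS
        have e1 : Multiset.replicate (k'+1) G₀ + (G₀ ::ₘ Δ₁)
            = G₀ ::ₘ G₀ ::ₘ (Multiset.replicate k' G₀ + Δ₁) := by
          rw [Multiset.replicate_succ, Multiset.cons_add, addc]
        have q2 := CProof.contrR (castC rfl e1 q1)
        -- weaken the succedent by Θ
        obtain ⟨q3⟩ := weakenC q2 id 0 Θ
        refine ⟨castC ?_ ?_ q3⟩
        · rw [mmap_id, zero_add]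
        · rw [mmap_id, addc, Multiset.replicate_succ, Multiset.cons_add]
          have hab : Θ + (Multiset.replicate k' G₀ + Δ₁)
              = Multiset.replicate k' G₀ + (Δ₁ + Θ) := by abel
          rw [hab]
      · obtain ⟨q1⟩ := ihp k ((B.imp D) ::ₘ Γ') hS
        obtain ⟨q2⟩ := ihq k (D ::ₘ Γ') (by rw [hS', addc])
        have q1' := castC rfl (addc _ _ _) q1
        have q3 := CProof.impL q1' q2
        refine contrDup k (castN rfl ?_ ⟨q3⟩)
        abel
  | @impR B D Γ₀ Δ₀ p ih =>
      intro k Γ hS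
      obtain ⟨q⟩ := ih k (B ::ₘ Γ) (by rw [hS, addc])
      have q2 := CProof.impR (castC rfl (addc _ _ _) q)
      exact ⟨castC rfl (addc _ _ _).symm q2⟩
  | @allL B Γ₀ Δ₀ t p ih =>
      intro k Γ hS
      rcases split_cons hS with ⟨hBN, _⟩ | ⟨Γ', rfl, hS'⟩
      · exfalso; simp at hBN
      · obtain ⟨q⟩ := ih k ((B.inst t) ::ₘ (Fm.all B) ::ₘ Γ') (by rw [hS', addc, addc])
        exact ⟨CProof.allL t q⟩
  | @exR B Γ₀ Δ₀ t p ih =>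
      intro k Γ hS
      obtain ⟨q⟩ := ih k Γ hS
      have q2 := CProof.exR t (castC rfl (addc _ _ _) q)
      exact ⟨castC rfl (addc _ _ _).symm q2⟩
  | @exL B Γ₀ Δ₀ c hc p ih =>
      intro k Γ hS
      rcases split_cons hS with ⟨hBN, _⟩ | ⟨Γ', rfl, hS'⟩
      · exfalso; simp at hBN
      · obtain ⟨q⟩ := ih k ((B.inst (Tm.const c)) ::ₘ Γ') (by rw [hS', addc])
        refine ⟨CProof.exL c ?_ q⟩
        constructor
        · intro F hF
          rcases Multiset.mem_cons.1 hF with rfl | hF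
          · exact hc.1 _ (Multiset.mem_cons_self _ _)
          · refine hc.1 F (Multiset.mem_cons_of_mem ?_)
            rw [hS']
            exact Multiset.mem_add.2 (Or.inr hF)
        · intro F hF
          rcases Multiset.mem_add.1 hF with hm | hm
          · have hk := (Multiset.mem_replicate.1 hm).1
            have hFG := (Multiset.mem_replicate.1 hm).2
            have hN : ¬ Fm.constIn c (G₀.imp Fm.bot) := by
              refine hc.1 _ (Multiset.mem_cons_of_mem ?_)
              rw [hS']
              exact Multiset.mem_add.2 (Or.inl (Multiset.mem_replicate.2 ⟨hk, rfl⟩))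
            rw [hFG]
            intro hcon
            exact hN (Or.inl hcon)
          · exact hc.2 F hm
  | @allR B Γ₀ Δ₀ c hc p ih =>
      intro k Γ hS
      obtain ⟨q⟩ := ih k Γ hS
      have q2 := castC rfl (addc _ _ _) q
      refine ⟨castC rfl (addc _ _ _).symm (CProof.allR c ?_ q2)⟩
      constructor
      · intro F hF
        refine hc.1 F ?_
        rw [hS]
        exact Multiset.mem_add.2 (Or.inr hF)
      · intro F hF
        rcases Multiset.mem_cons.1 hF with rfl | hF
        · exact hc.2 _ (Multiset.mem_cons_self _ _)
        · rcases Multiset.mem_add.1 hF with hm | hm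
          · have hk := (Multiset.mem_replicate.1 hm).1
            have hFG := (Multiset.mem_replicate.1 hm).2
            have hN : ¬ Fm.constIn c (G₀.imp Fm.bot) := by
              refine hc.1 _ ?_
              rw [hS]
              exact Multiset.mem_add.2 (Or.inl (Multiset.mem_replicate.2 ⟨hk, rfl⟩))
            rw [hFG]
            intro hcon
            exact hN (Or.inl hcon)
          · exact hc.2 F (Multiset.mem_cons_of_mem hm)

end St16

/-- Theorem `upprop`: let `G` be a G-formula and `Γ` a
multiset of D-formulas. Then `Γ ⊢_C G` if and only if `G⊃⊥, Γ ⊢_O G`. -/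
theorem statement_16 (Γ : Multiset Fm) (G : Fm) (hΓ : ∀ X ∈ Γ, DFm X) (hG : GFm G) :
    CProv Γ G ↔ UProv ((G.imp Fm.bot) ::ₘ Γ) G := by
  constructor
  · intro hC
    obtain ⟨p⟩ := hC
    have hΔ : ∀ B ∈ ({G} : Multiset Fm), GFm B := by
      intro B hB; rw [Multiset.mem_singleton.1 hB]; exact hG
    have hkl := St16.KL (G₀ := G) p id hΓ hΔ Γ ?_ ?_
    · obtain ⟨n, hn⟩ := hkl
      obtain ⟨q, hq⟩ := St16.up_to_uniform hn
      exact ⟨q, hq⟩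
    · rw [St16.mmap_id]; exact St16.SGe.refl Γ
    · intro B hB S' h1 h2
      rw [St16.fmap_id] at h2
      rw [Multiset.mem_singleton.1 hB] at h2
      exact h2
  · intro hU
    obtain ⟨q, _⟩ := hU
    have h1 := St16.inv (G₀ := G) q 1 Γ ?_
    · obtain ⟨r⟩ := h1
      have e : Multiset.replicate 1 G + ({G} : Multiset Fm) = G ::ₘ G ::ₘ 0 := by
        simp
      exact ⟨CProof.contrR (St16.castC rfl e r)⟩
    · simp
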